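/- arXiv:2002.09079 — 5 statements merged into one kernel-verified Lean document; each statement's English description precedes it below -/
import Mathlib

section
/- Let F be the global map of ECA rule 184 and let p ∈ [0,1]. Then for every n ≥ 0, starting from the Bernoulli measure μ_p: P_n(0) = 1 − p, and P_n(00) = Σ_{j=1}^{n+1} (j/(n+1))·C(2n+2, n+1−j)·p^{n+1−j}·(1−p)^{n+1+j}, where C(·,·) denotes the binomial coefficient. -/
open MeasureTheory
open scoped ENNReal

/-- The cylinder set generated by the binary word `b` (anchored at `0`). -/
def cylinder (b : List Bool) : Set (ℤ → Bool) :=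
  {x | ∀ j : Fin b.length, x (j.val : ℤ) = b.get j}

/-- The global map of the elementary cellular automaton with local rule `f`. -/
def eca (f : Bool → Bool → Bool → Bool) (x : ℤ → Bool) : ℤ → Bool :=
  fun i => f (x (i - 1)) (x i) (x (i + 1))

/-- The local rule of ECA rule 184: `f(x1,x2,x3) = x1` if `x2 = 0`, and `x3` if `x2 = 1`. -/
def rule184 (x1 x2 x3 : Bool) : Bool := if x2 then x3 else x1

/-- `μ` is the Bernoulli (i.i.d. product) measure with parameter `p`. -/
def IsBernoulli (p : ℝ) (μ : Measure (ℤ → Bool)) : Prop :=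
  ∀ (s : Finset ℤ) (f : ℤ → Bool),
    μ {x | ∀ i ∈ s, x i = f i} =
      ∏ i ∈ s, (if f i then ENNReal.ofReal p else ENNReal.ofReal (1 - p))

namespace R184

abbrev L : (ℤ → Bool) → (ℤ → Bool) := eca rule184

def sgn (b : Bool) : ℤ := if b then 1 else -1

/-- prefix sums of `±1` weights starting at `a`. -/
def S (x : ℤ → Bool) (a : ℤ) (k : ℕ) : ℤ := ∑ i ∈ Finset.range k, sgn (x (a + i))

/-- all prefix sums (of lengths `1..l`) are negative. -/
def PN (x : ℤ → Bool) (a : ℤ) (l : ℕ) : Prop := ∀ k ∈ Finset.Icc 1 l, S x a k < 0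

instance (x : ℤ → Bool) (a : ℤ) (l : ℕ) : Decidable (PN x a l) := by
  unfold PN; infer_instance

/-- pad a finite word into a biinfinite configuration (zeros outside). -/
def pad (a : ℤ) (m : ℕ) (w : Fin m → Bool) : ℤ → Bool :=
  fun i => if h : 0 ≤ i - a ∧ (i - a).toNat < m then w ⟨(i - a).toNat, h.2⟩ else false

lemma S_succ (x : ℤ → Bool) (a : ℤ) (k : ℕ) :
    S x a (k + 1) = S x a k + sgn (x (a + k)) := Finset.sum_range_succ _ _

lemma S_one (x : ℤ → Bool) (a : ℤ) : S x a 1 = sgn (x a) := by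
  simp [S]

lemma pad_apply (a : ℤ) (m : ℕ) (w : Fin m → Bool) (i : ℕ) :
    pad a m w (a + i) = if h : i < m then w ⟨i, h⟩ else false := by
  unfold pad
  simp only [show a + (i : ℤ) - a = (i : ℤ) from by ring, Int.toNat_natCast,
    Int.natCast_nonneg, true_and]

lemma pad_apply_of_mem (a : ℤ) (m : ℕ) (w : Fin m → Bool) (j : Fin m) :
    pad a m w (a + j) = w j := by
  rw [pad_apply a m w j, dif_pos j.isLt]

/-- locality of the iterated CA. -/
lemma out_local (n : ℕ) (x y : ℤ → Bool) (i : ℤ)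
    (h : ∀ j : ℤ, i - n ≤ j → j ≤ i + n → x j = y j) :
    L^[n] x i = L^[n] y i := by
  induction n generalizing x y i with
  | zero => simpa using h i (by simp) (by simp)
  | succ n ih =>
    rw [Function.iterate_succ_apply, Function.iterate_succ_apply]
    refine ih (L x) (L y) i ?_
    intro j hj1 hj2
    show rule184 (x (j-1)) (x j) (x (j+1)) = rule184 (y (j-1)) (y j) (y (j+1))
    have c1 : x (j - 1) = y (j - 1) := h _ (by push_cast; omega) (by push_cast; omega)
    have c2 : x j = y j := h _ (by push_cast; omega) (by push_cast; omega)
    have c3 : x (j + 1) = y (j + 1) := h _ (by push_cast; omega) (by push_cast; omega)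
    rw [c1, c2, c3]

/-- translation equivariance. -/
lemma out_shift (n : ℕ) (x : ℤ → Bool) (i : ℤ) :
    L^[n] (fun j => x (j + 1)) i = L^[n] x (i + 1) := by
  induction n generalizing x i with
  | zero => simp
  | succ n ih =>
    rw [Function.iterate_succ_apply, Function.iterate_succ_apply]
    have hL : L (fun j => x (j + 1)) = fun j => L x (j + 1) := by
      funext j
      show rule184 (x (j-1+1)) (x (j+1)) (x (j+1+1)) = rule184 (x (j+1-1)) (x (j+1)) (x (j+1+1))
      congr 2 <;> ring_nf
    rw [hL, ih]


lemma L_apply (x : ℤ → Bool) (i : ℤ) :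
    L x i = rule184 (x (i - 1)) (x i) (x (i + 1)) := rfl

lemma sgn_true : sgn true = 1 := rfl
lemma sgn_false : sgn false = -1 := rfl

lemma S_parity (x : ℤ → Bool) (a : ℤ) (k : ℕ) : (S x a k + k) % 2 = 0 := by
  induction k with
  | zero => simp [S]
  | succ k ih =>
    rw [S_succ]
    cases h : x (a + k) <;> simp [sgn] <;> push_cast <;> omega

/-- Key identity relating prefix sums of `L x` to those of `x`. -/
lemma Skey (x : ℤ → Bool) (a : ℤ) (k : ℕ) :
    S (L x) (a + 1) k =
      S x a (k + 1) + 1 - 2 * (if x a = true ∧ x (a + 1) = true then 1 else 0)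
        - 2 * (if x (a + (k : ℤ)) = true ∧ x (a + (k : ℤ) + 1) = false then 1 else 0) := by
  induction k with
  | zero =>
    have h0 : S (L x) (a + 1) 0 = 0 := by simp [S]
    rw [h0, S_one]
    simp only [Nat.cast_zero, add_zero]
    cases hx : x a <;> cases h1 : x (a + 1) <;> simp [sgn, hx, h1]
  | succ k ih =>
    have e1 : a + (↑(k + 1) : ℤ) = a + ↑k + 1 := by push_cast; ring
    have e2 : a + (↑k : ℤ) + 1 + 1 = a + ↑k + 2 := by ring
    rw [S_succ (L x) (a + 1) k, ih, S_succ x a (k + 1), e1, e2]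
    have hL : L x (a + 1 + ↑k) =
        rule184 (x (a + ↑k)) (x (a + ↑k + 1)) (x (a + ↑k + 2)) := by
      rw [L_apply]
      have g1 : a + 1 + (↑k : ℤ) - 1 = a + ↑k := by ring
      have g2 : a + 1 + (↑k : ℤ) = a + ↑k + 1 := by ring
      have g3 : a + 1 + (↑k : ℤ) + 1 = a + ↑k + 2 := by ring
      rw [g1, g3, g2]
    rw [hL]
    cases hu : x (a + ↑k) <;> cases hv : x (a + ↑k + 1) <;> cases hw : x (a + ↑k + 2) <;>
      simp [rule184, sgn, hu, hv, hw] <;> ring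

lemma PN_iff (x : ℤ → Bool) (a : ℤ) (l : ℕ) :
    PN x a l ↔ ∀ k, 1 ≤ k → k ≤ l → S x a k < 0 := by
  simp [PN, Finset.mem_Icc, and_imp]

/-- the one-step lemma: prefix-negativity propagates through one application of `L`. -/
lemma onestep (x : ℤ → Bool) (a : ℤ) (m : ℕ) (hm : 2 ≤ m) (hme : m % 2 = 0) :
    PN (L x) (a + 1) m ↔ PN x a (m + 2) := by
  rw [PN_iff, PN_iff]
  constructor
  · intro G
    -- deduce x a = false and x (a+1) = false
    have hLa1 : L x (a + 1) = rule184 (x a) (x (a + 1)) (x (a + 2)) := by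
      rw [L_apply, show a + 1 - 1 = a from by ring, show a + 1 + 1 = a + 2 from by ring]
    have h1 := G 1 le_rfl (by omega)
    rw [S_one] at h1
    have hLf : L x (a + 1) = false := by
      cases h : L x (a + 1)
      · rfl
      · rw [h] at h1; simp [sgn] at h1
    have hx1 : x (a + 1) = false := by
      cases hx1t : x (a + 1)
      · rfl
      · exfalso
        have hv : L x (a + 1) = x (a + 2) := by rw [hLa1]; simp [rule184, hx1t]
        have hx2 : x (a + 2) = false := by rw [← hv]; exact hLf
        have hLa2 : L x (a + 2) = true := by
          rw [L_apply, show a + 2 - 1 = a + 1 from by ring]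
          simp [rule184, hx2, hx1t]
        have h2 := G 2 (by omega) (by omega)
        have hS2 : S (L x) (a + 1) 2 = S (L x) (a + 1) 1 + sgn (L x (a + 1 + (1 : ℕ))) :=
          S_succ _ _ 1
        rw [show a + 1 + ((1 : ℕ) : ℤ) = a + 2 from by push_cast; ring, S_one, hLf, hLa2]
          at hS2
        rw [hS2] at h2
        simp [sgn] at h2
    have hxa : x a = false := by
      have hv : L x (a + 1) = x a := by rw [hLa1]; simp [rule184, hx1]
      rw [← hv]; exact hLf
    intro k hk1 hkm
    rcases Nat.lt_or_ge k 3 with hsmall | hbig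
    · interval_cases k
      · rw [S_one, hxa]; simp [sgn]
      · have : S x a (1 + 1) = S x a 1 + sgn (x (a + (1 : ℕ))) := S_succ _ _ 1
        rw [show a + ((1 : ℕ) : ℤ) = a + 1 from by push_cast; ring, S_one, hxa, hx1] at this
        rw [show (2 : ℕ) = 1 + 1 from rfl, this]; simp [sgn]
    · rcases Nat.lt_or_ge k (m + 2) with hlt | hge
      · obtain ⟨k', rfl⟩ : ∃ k', k = k' + 1 := ⟨k - 1, by omega⟩
        have key := Skey x a k'
        simp only [hxa, false_and, if_false, Bool.false_eq_true] at key
        have hyk := G k' (by omega) (by omega)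
        by_cases hα : x (a + (k' : ℤ)) = true ∧ x (a + (k' : ℤ) + 1) = false
        · rw [if_pos hα] at key
          rcases (by omega : S (L x) (a + 1) k' ≤ -2 ∨ S (L x) (a + 1) k' = -1) with h | h
          · omega
          · exfalso
            have hpar := S_parity (L x) (a + 1) k'
            have hyk1 := G (k' + 1) (by omega) (by omega)
            have hstep : S (L x) (a + 1) (k' + 1) =
                S (L x) (a + 1) k' + sgn (L x (a + 1 + (k' : ℤ))) := S_succ _ _ k'
            have hLk : L x (a + 1 + (k' : ℤ)) = true := by
              rw [L_apply, show a + 1 + (k' : ℤ) - 1 = a + (k' : ℤ) from by ring,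
                show a + 1 + (k' : ℤ) + 1 = a + (k' : ℤ) + 1 + 1 from by ring,
                show a + 1 + (k' : ℤ) = a + (k' : ℤ) + 1 from by ring]
              simp [rule184, hα.1, hα.2]
            rw [hLk] at hstep
            simp only [sgn_true] at hstep
            omega
        · rw [if_neg hα] at key
          omega
      · obtain rfl : k = m + 1 + 1 := by omega
        have key := Skey x a m
        simp only [hxa, false_and, if_false, Bool.false_eq_true] at key
        have hym := G m (by omega) le_rfl
        have hstep : S x a (m + 1 + 1) = S x a (m + 1) + sgn (x (a + ((m + 1 : ℕ) : ℤ))) :=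
          S_succ _ _ (m + 1)
        cases hxm1 : x (a + ((m + 1 : ℕ) : ℤ))
        · rw [hxm1] at hstep
          simp only [sgn_false] at hstep
          have hb : (if x (a + (m : ℤ)) = true ∧ x (a + (m : ℤ) + 1) = false then (1 : ℤ)
              else 0) ≤ 1 := by split <;> omega
          omega
        · rw [show a + ((m : ℕ) : ℤ) + 1 = a + ((m + 1 : ℕ) : ℤ) from by push_cast; ring,
            hxm1] at key
          simp only [Bool.true_eq_false, and_false, if_false] at key
          rw [hxm1] at hstep
          simp only [sgn_true] at hstep
          omega
  · intro H
    intro k hk1 hkm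
    have hxa : x a = false := by
      have h1 := H 1 (by omega) (by omega)
      rw [S_one] at h1
      cases h : x a
      · rfl
      · rw [h] at h1; simp [sgn] at h1
    have key := Skey x a k
    simp only [hxa, false_and, if_false, Bool.false_eq_true] at key
    have hk1' := H (k + 1) (by omega) (by omega)
    by_cases hα : x (a + (k : ℤ)) = true ∧ x (a + (k : ℤ) + 1) = false
    · rw [if_pos hα] at key; omega
    · rw [if_neg hα] at key
      rcases (by omega : S x a (k + 1) ≤ -2 ∨ S x a (k + 1) = -1) with h | h
      · omega
      · exfalso
        by_cases hxk : x (a + (k : ℤ)) = true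
        · have hxk1 : x (a + (k : ℤ) + 1) = true := by
            cases hh : x (a + (k : ℤ) + 1)
            · exact absurd ⟨hxk, hh⟩ hα
            · rfl
          have hk2 := H (k + 1 + 1) (by omega) (by omega)
          have hstep : S x a (k + 1 + 1) = S x a (k + 1) + sgn (x (a + ((k + 1 : ℕ) : ℤ))) :=
            S_succ _ _ (k + 1)
          rw [show a + ((k + 1 : ℕ) : ℤ) = a + (k : ℤ) + 1 from by push_cast; ring,
            hxk1] at hstep
          simp only [sgn_true] at hstep
          omega
        · have hxkf : x (a + (k : ℤ)) = false := by
            cases hh : x (a + (k : ℤ))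
            · rfl
            · exact absurd hh hxk
          have hkk := H k hk1 (by omega)
          have hstep : S x a (k + 1) = S x a k + sgn (x (a + (k : ℕ))) := S_succ _ _ k
          rw [hxkf] at hstep
          simp only [sgn_false] at hstep
          omega

lemma charac (n : ℕ) (x : ℤ → Bool) :
    (L^[n] x 0 = false ∧ L^[n] x 1 = false) ↔ PN x (-(n : ℤ)) (2 * n + 2) := by
  induction n generalizing x with
  | zero =>
    simp only [Function.iterate_zero, id]
    rw [PN_iff]
    have e0 : (-((0 : ℕ) : ℤ)) = 0 := by simp
    have hS1 : S x (-((0 : ℕ) : ℤ)) 1 = sgn (x 0) := by rw [e0, S_one]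
    have hS2 : S x (-((0 : ℕ) : ℤ)) (1 + 1) = S x (-((0 : ℕ) : ℤ)) 1 + sgn (x 1) := by
      rw [S_succ, e0]
      norm_num
    constructor
    · rintro ⟨h0, h1⟩ k hk1 hk2
      interval_cases k
      · rw [hS1, h0]; simp [sgn]
      · rw [show (2 : ℕ) = 1 + 1 from rfl, hS2, hS1, h0, h1]; simp [sgn]
    · intro h
      have h1 := h 1 (by omega) (by omega)
      have h2 := h (1 + 1) (by omega) (by omega)
      rw [hS1] at h1
      rw [hS2, hS1] at h2
      constructor
      · cases h : x 0
        · rfl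
        · rw [h] at h1; simp [sgn] at h1
      · cases h' : x 1
        · rfl
        · exfalso
          cases h : x 0
          · rw [h, h'] at h2; simp [sgn] at h2
          · rw [h] at h1; simp [sgn] at h1
    
  | succ n ih =>
    rw [Function.iterate_succ_apply]
    rw [ih (L x)]
    have hos := onestep x (-((n + 1 : ℕ) : ℤ)) (2 * n + 2) (by omega) (by omega)
    rw [show (-((n + 1 : ℕ) : ℤ)) + 1 = -((n : ℕ) : ℤ) from by push_cast; ring] at hos
    rw [show 2 * (n + 1) + 2 = 2 * n + 2 + 2 from by ring, ← hos]

/-! ### Words, weights, counting -/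

def res (a : ℤ) (m : ℕ) (x : ℤ → Bool) : Fin m → Bool := fun j => x (a + (j.val : ℤ))

noncomputable def weightE (p : ℝ) {m : ℕ} (w : Fin m → Bool) : ℝ≥0∞ :=
  ∏ j, (if w j then ENNReal.ofReal p else ENNReal.ofReal (1 - p))

def ones {m : ℕ} (w : Fin m → Bool) : ℕ := ∑ j, (if w j then 1 else 0)

def WPN {m : ℕ} (w : Fin m → Bool) : Prop := PN (pad 0 m w) 0 m

instance {m : ℕ} (w : Fin m → Bool) : Decidable (WPN w) := by unfold WPN; infer_instance

def cnt (m k : ℕ) : ℕ :=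
  ((Finset.univ : Finset (Fin m → Bool)).filter (fun w => WPN w ∧ ones w = k)).card

lemma pad_res_agree (a : ℤ) (m : ℕ) (x : ℤ → Bool) (i : ℤ) (h1 : a ≤ i) (h2 : i < a + m) :
    pad a m (res a m x) i = x i := by
  obtain ⟨i', hi'⟩ : ∃ i' : ℕ, i - a = (i' : ℤ) := ⟨(i - a).toNat, (Int.toNat_of_nonneg (by omega)).symm⟩
  have hia : i = a + (i' : ℤ) := by omega
  have hlt : i' < m := by omega
  subst hia
  rw [pad_apply, dif_pos hlt]
  rfl

lemma S_pad_shift (a : ℤ) (m : ℕ) (w : Fin m → Bool) (k : ℕ) :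
    S (pad a m w) a k = S (pad 0 m w) 0 k := by
  unfold S
  refine Finset.sum_congr rfl fun i _ => ?_
  rw [pad_apply, pad_apply]

lemma S_pad_snoc_le (m : ℕ) (v : Fin m → Bool) (b : Bool) (k : ℕ) (hk : k ≤ m) :
    S (pad 0 (m + 1) (Fin.snoc v b)) 0 k = S (pad 0 m v) 0 k := by
  unfold S
  refine Finset.sum_congr rfl fun i hi => ?_
  have him : i < m := by have := Finset.mem_range.mp hi; omega
  rw [pad_apply, pad_apply, dif_pos (by omega : i < m + 1), dif_pos him]
  congr 1
  have : (⟨i, by omega⟩ : Fin (m + 1)) = Fin.castSucc ⟨i, him⟩ := rfl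
  rw [this, Fin.snoc_castSucc]

lemma S_pad_snoc_top (m : ℕ) (v : Fin m → Bool) (b : Bool) :
    S (pad 0 (m + 1) (Fin.snoc v b)) 0 (m + 1) = S (pad 0 m v) 0 m + sgn b := by
  rw [S_succ, S_pad_snoc_le m v b m le_rfl]
  congr 1
  rw [pad_apply, dif_pos (by omega : m < m + 1)]
  have : (⟨m, by omega⟩ : Fin (m + 1)) = Fin.last m := rfl
  rw [this, Fin.snoc_last]

lemma S_pad_full (m : ℕ) (v : Fin m → Bool) :
    S (pad 0 m v) 0 m = 2 * (ones v : ℤ) - m := by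
  unfold S
  rw [← Fin.sum_univ_eq_sum_range (fun i => sgn (pad 0 m v (0 + (i : ℤ)))) m]
  have h1 : ∀ j : Fin m, sgn (pad 0 m v (0 + (j.val : ℤ))) = 2 * (if v j then (1 : ℤ) else 0) - 1 := by
    intro j
    rw [pad_apply, dif_pos j.isLt]
    cases h : v j <;> simp [sgn, h, Fin.eta]
  rw [Finset.sum_congr rfl fun j _ => h1 j, Finset.sum_sub_distrib, ← Finset.mul_sum,
    Finset.sum_const, Finset.card_univ, Fintype.card_fin]
  have : ((ones v : ℕ) : ℤ) = ∑ j : Fin m, (if v j then (1 : ℤ) else 0) := by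
    unfold ones
    push_cast
    exact Finset.sum_congr rfl fun j _ => by cases h : v j <;> simp [h]
  rw [this]
  push_cast
  ring

lemma ones_snoc (m : ℕ) (v : Fin m → Bool) (b : Bool) :
    ones (Fin.snoc v b) = ones v + (if b then 1 else 0) := by
  unfold ones
  rw [Fin.sum_univ_castSucc]
  simp [Fin.snoc_castSucc, Fin.snoc_last]

lemma WPN_snoc (m : ℕ) (v : Fin m → Bool) (b : Bool) :
    WPN (Fin.snoc v b) ↔ WPN v ∧ 2 * (ones v + (if b then 1 else 0)) < m + 1 := by
  unfold WPN
  rw [PN_iff, PN_iff]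
  constructor
  · intro h
    refine ⟨fun k hk1 hk2 => ?_, ?_⟩
    · rw [← S_pad_snoc_le m v b k hk2]
      exact h k hk1 (by omega)
    · have htop := h (m + 1) (by omega) le_rfl
      rw [S_pad_snoc_top, S_pad_full] at htop
      rcases Bool.dichotomy b with hb | hb
      · rw [hb] at htop ⊢
        simp only [sgn_false] at htop
        simp only [Bool.false_eq_true, if_false]
        omega
      · rw [hb] at htop ⊢
        simp only [sgn_true] at htop
        simp only [if_true]
        omega
  · rintro ⟨h1, h2⟩ k hk1 hk2
    rcases Nat.lt_or_ge k (m + 1) with hlt | hge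
    · rw [S_pad_snoc_le m v b k (by omega)]
      exact h1 k hk1 (by omega)
    · obtain rfl : k = m + 1 := by omega
      rw [S_pad_snoc_top, S_pad_full]
      rcases Bool.dichotomy b with hb | hb
      · rw [hb] at h2 ⊢
        simp only [Bool.false_eq_true, if_false] at h2
        simp only [sgn_false]
        omega
      · rw [hb] at h2 ⊢
        simp only [if_true] at h2
        simp only [sgn_true]
        omega

def snocEquiv (m : ℕ) : ((Fin m → Bool) × Bool) ≃ (Fin (m + 1) → Bool) where
  toFun vb := Fin.snoc vb.1 vb.2
  invFun w := (fun i => w i.castSucc, w (Fin.last m))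
  left_inv := by
    rintro ⟨v, b⟩
    simp
  right_inv := by
    intro w
    exact Fin.snoc_init_self w

lemma cnt_eq_zero (m k : ℕ) (hm : 1 ≤ m) (hk : m ≤ 2 * k) : cnt m k = 0 := by
  unfold cnt
  rw [Finset.card_eq_zero, Finset.filter_eq_empty_iff]
  rintro w - ⟨hw, rfl⟩
  have := (PN_iff _ _ _).mp hw m hm le_rfl
  rw [S_pad_full] at this
  omega

lemma cnt_zero (m : ℕ) : cnt m 0 = 1 := by
  unfold cnt
  rw [Finset.card_eq_one]
  refine ⟨fun _ => false, ?_⟩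
  ext w
  simp only [Finset.mem_filter, Finset.mem_univ, true_and, Finset.mem_singleton]
  constructor
  · rintro ⟨-, hw⟩
    funext j
    unfold ones at hw
    have hz := (Finset.sum_eq_zero_iff.mp hw) j (Finset.mem_univ j)
    cases h : w j
    · rfl
    · rw [h] at hz; simp at hz
  · rintro rfl
    have hfalse : ∀ i : ℤ, pad 0 m (fun _ => false) i = false := by
      intro i
      unfold pad
      split <;> rfl
    have hS : ∀ k : ℕ, S (pad 0 m (fun _ => false)) 0 k = -(k : ℤ) := by
      intro k
      induction k with
      | zero => simp [S]
      | succ k ih => rw [S_succ, ih, hfalse]; simp [sgn]; ring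
    refine ⟨(PN_iff _ _ _).mpr fun k hk1 hk2 => ?_, ?_⟩
    · rw [hS]; omega
    · unfold ones; simp

lemma cnt_card_sum (m k : ℕ) :
    cnt m k = ∑ w : Fin m → Bool, (if WPN w ∧ ones w = k then 1 else 0) := by
  unfold cnt
  rw [Finset.card_filter]

lemma cnt_succ (m k : ℕ) :
    cnt (m + 1) k = ∑ v : Fin m → Bool, ∑ b : Bool,
      (if (WPN v ∧ 2 * (ones v + (if b then 1 else 0)) < m + 1) ∧
          ones v + (if b then 1 else 0) = k then 1 else 0) := by
  rw [cnt_card_sum, ← Equiv.sum_comp (snocEquiv m)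
    (fun w => if WPN w ∧ ones w = k then (1 : ℕ) else 0), Fintype.sum_prod_type]
  refine Finset.sum_congr rfl fun v _ => Finset.sum_congr rfl fun b _ => ?_
  have : (snocEquiv m) (v, b) = Fin.snoc v b := rfl
  rw [this]
  refine if_congr ?_ rfl rfl
  rw [WPN_snoc, ones_snoc]

lemma cnt_succ_succ (m k : ℕ) (h : 2 * (k + 1) ≤ m) :
    cnt (m + 1) (k + 1) = cnt m (k + 1) + cnt m k := by
  rw [cnt_succ, cnt_card_sum, cnt_card_sum, ← Finset.sum_add_distrib]
  refine Finset.sum_congr rfl fun v _ => ?_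
  rw [Fintype.sum_bool]
  simp only [eq_self_iff_true, if_true, Bool.false_eq_true, if_false, add_zero]
  by_cases h1 : WPN v
  · by_cases h2 : ones v = k
    · rw [if_pos ⟨⟨h1, by omega⟩, by omega⟩, if_neg (by omega), if_neg (by omega), if_pos ⟨h1, h2⟩]
    · by_cases h3 : ones v = k + 1
      · rw [if_neg (by omega), if_pos ⟨⟨h1, by omega⟩, by omega⟩, if_pos ⟨h1, h3⟩, if_neg (by omega)]
      · rw [if_neg (by omega), if_neg (by omega), if_neg (by tauto), if_neg (by tauto)]
  · rw [if_neg (by tauto), if_neg (by tauto), if_neg (by tauto), if_neg (by tauto)]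

lemma cnt_formula (m : ℕ) : ∀ k : ℕ, 1 ≤ m → 2 * k ≤ m →
    (cnt m k : ℤ) * m + 2 * k * (m.choose k) = m * m.choose k := by
  induction m with
  | zero => intro k h; omega
  | succ m ih =>
    intro k hm hk
    rcases Nat.eq_zero_or_pos k with rfl | hkpos
    · rw [cnt_zero]
      simp
    · obtain ⟨k', rfl⟩ : ∃ k', k = k' + 1 := ⟨k - 1, by omega⟩
      rcases Nat.lt_or_ge m (2 * (k' + 1)) with hbig | hle
      · -- 2*(k'+1) = m+1
        have he : 2 * (k' + 1) = m + 1 := by omega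
        rw [cnt_eq_zero (m + 1) (k' + 1) (by omega) (by omega)]
        have hc : ((m : ℤ) + 1) = 2 * ((k' : ℤ) + 1) := by exact_mod_cast he.symm
        push_cast
        linear_combination (-(((m + 1).choose (k' + 1) : ℤ))) * hc
      · -- recurrence case, m ≥ 2
        have hm1 : 1 ≤ m := by omega
        have i1 := ih (k' + 1) hm1 hle
        have i2 := ih k' hm1 (by omega)
        have habs : ((m.choose (k' + 1) : ℤ)) * (k' + 1) = (m.choose k') * (m - k') := by
          have := Nat.choose_succ_right_eq m k'
          have hsub : (((m : ℕ) - k' : ℕ) : ℤ) = (m : ℤ) - k' := by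
            have : k' ≤ m := by omega
            omega
          calc ((m.choose (k' + 1) : ℤ)) * (k' + 1) = ((m.choose (k' + 1) * (k' + 1) : ℕ) : ℤ) := by push_cast; ring
          _ = ((m.choose k' * (m - k') : ℕ) : ℤ) := by rw [this]
          _ = (m.choose k') * ((m : ℤ) - k') := by push_cast [hsub]; ring
        have hpascal : ((m + 1 : ℕ).choose (k' + 1) : ℤ) = m.choose k' + m.choose (k' + 1) := by
          rw [Nat.choose_succ_succ]
          push_cast
          ring
        rw [cnt_succ_succ m k' hle, hpascal]
        have hgoal : (((cnt m (k' + 1) : ℤ) + cnt m k') * ((m : ℤ) + 1) +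
              2 * ((k' : ℤ) + 1) * ((m.choose k' : ℤ) + m.choose (k' + 1))) * (m : ℤ) =
            (((m : ℤ) + 1) * ((m.choose k' : ℤ) + m.choose (k' + 1))) * (m : ℤ) := by
          push_cast at i1 i2
          linear_combination ((m : ℤ) + 1) * i1 + ((m : ℤ) + 1) * i2 - 2 * habs
        have hmne : (m : ℤ) ≠ 0 := by
          have : (1 : ℤ) ≤ (m : ℤ) := by exact_mod_cast hm1
          omega
        have hfin := mul_right_cancel₀ hmne hgoal
        push_cast at hfin ⊢
        linarith [hfin]

/-! ### Measure computations -/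

lemma weightE_ne_top (p : ℝ) {m : ℕ} (w : Fin m → Bool) : weightE p w ≠ ⊤ := by
  unfold weightE
  refine (ENNReal.prod_lt_top fun j _ => ?_).ne
  split <;> exact ENNReal.ofReal_lt_top

lemma measurable_res (a : ℤ) (m : ℕ) (w : Fin m → Bool) :
    MeasurableSet {x : ℤ → Bool | res a m x = w} := by
  have hset : {x : ℤ → Bool | res a m x = w} =
      ⋂ j : Fin m, (fun x : ℤ → Bool => x (a + (j.val : ℤ))) ⁻¹' {w j} := by
    ext x
    simp [res, funext_iff]
  rw [hset]
  exact MeasurableSet.iInter fun j => (measurable_pi_apply _) (measurableSet_singleton _)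

lemma mu_res (p : ℝ) (μ : Measure (ℤ → Bool)) (hber : IsBernoulli p μ)
    (a : ℤ) (m : ℕ) (w : Fin m → Bool) :
    μ {x | res a m x = w} = weightE p w := by
  have hinj : Function.Injective (fun j : Fin m => a + (j.val : ℤ)) := by
    intro j j' h
    simp only [add_right_inj, Int.natCast_inj] at h
    exact Fin.ext h
  have hset : {x : ℤ → Bool | res a m x = w} =
      {x | ∀ i ∈ Finset.image (fun j : Fin m => a + (j.val : ℤ)) Finset.univ,
        x i = pad a m w i} := by
    ext x
    simp only [Set.mem_setOf_eq, Finset.mem_image, Finset.mem_univ, true_and, funext_iff]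
    constructor
    · rintro h i ⟨j, rfl⟩
      rw [pad_apply_of_mem]
      exact h j
    · intro h j
      have := h (a + (j.val : ℤ)) ⟨j, rfl⟩
      rwa [pad_apply_of_mem] at this
  rw [hset, hber _ (pad a m w), Finset.prod_image (fun j _ j' _ h => hinj h)]
  unfold weightE
  refine Finset.prod_congr rfl fun j _ => ?_
  rw [pad_apply_of_mem]

lemma WIN (p : ℝ) (μ : Measure (ℤ → Bool)) (hber : IsBernoulli p μ)
    (a : ℤ) (m : ℕ) (Φ : (ℤ → Bool) → Prop) [DecidablePred Φ]
    (hloc : ∀ x : ℤ → Bool, Φ x ↔ Φ (pad a m (res a m x))) :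
    μ {x | Φ x} =
      ∑ w ∈ Finset.univ.filter (fun w : Fin m → Bool => Φ (pad a m w)), weightE p w := by
  have hset : {x | Φ x} =
      ⋃ w ∈ Finset.univ.filter (fun w : Fin m → Bool => Φ (pad a m w)),
        {x : ℤ → Bool | res a m x = w} := by
    ext x
    simp only [Set.mem_setOf_eq, Set.mem_iUnion, Finset.mem_filter, Finset.mem_univ, true_and]
    constructor
    · intro h
      exact ⟨res a m x, (hloc x).mp h, rfl⟩
    · rintro ⟨w, hw, hxw⟩
      rw [hloc x, hxw]
      exact hw
  rw [hset, measure_biUnion_finset ?_ fun w _ => measurable_res a m w]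
  · exact Finset.sum_congr rfl fun w _ => mu_res p μ hber a m w
  · intro w _ w' _ hne
    refine Set.disjoint_left.mpr fun x hx hx' => ?_
    exact hne (hx ▸ hx' ▸ rfl)

lemma hsum1 (p : ℝ) (hp0 : 0 ≤ p) (hp1 : p ≤ 1) :
    (if (true : Bool) then ENNReal.ofReal p else ENNReal.ofReal (1 - p)) +
      (if (false : Bool) then ENNReal.ofReal p else ENNReal.ofReal (1 - p)) = 1 := by
  simp only [if_true, Bool.false_eq_true, if_false]
  rw [← ENNReal.ofReal_add hp0 (by linarith)]
  norm_num

lemma weightE_cons (p : ℝ) {m : ℕ} (b : Bool) (v : Fin m → Bool) :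
    weightE p (Fin.cons b v) =
      (if b then ENNReal.ofReal p else ENNReal.ofReal (1 - p)) * weightE p v := by
  unfold weightE
  rw [Fin.prod_univ_succ]
  simp only [Fin.cons_zero, Fin.cons_succ]

lemma weightE_snoc (p : ℝ) {m : ℕ} (v : Fin m → Bool) (b : Bool) :
    weightE p (Fin.snoc v b) =
      weightE p v * (if b then ENNReal.ofReal p else ENNReal.ofReal (1 - p)) := by
  unfold weightE
  rw [Fin.prod_univ_castSucc]
  simp only [Fin.snoc_castSucc, Fin.snoc_last]

lemma marg_tail (p : ℝ) (hp0 : 0 ≤ p) (hp1 : p ≤ 1) (m : ℕ)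
    (D : (Fin m → Bool) → Prop) [DecidablePred D] :
    ∑ w ∈ Finset.univ.filter (fun w : Fin (m + 1) → Bool => D (fun j => w j.succ)),
        weightE p w =
      ∑ v ∈ Finset.univ.filter D, weightE p v := by
  rw [Finset.sum_filter, Finset.sum_filter]
  rw [← Equiv.sum_comp (Fin.consEquiv (fun _ : Fin (m + 1) => Bool))
    (fun w => if D (fun j => w j.succ) then weightE p w else 0), Fintype.sum_prod_type]
  have hc : ∀ (b : Bool) (v : Fin m → Bool),
      (Fin.consEquiv (fun _ : Fin (m + 1) => Bool)) (b, v) = Fin.cons b v := fun _ _ => rfl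
  calc ∑ b : Bool, ∑ v : Fin m → Bool,
        (if D (fun j => (Fin.consEquiv (fun _ : Fin (m + 1) => Bool)) (b, v) j.succ)
          then weightE p ((Fin.consEquiv (fun _ : Fin (m + 1) => Bool)) (b, v)) else 0)
      = ∑ b : Bool, (if b then ENNReal.ofReal p else ENNReal.ofReal (1 - p)) *
          ∑ v : Fin m → Bool, (if D v then weightE p v else 0) := by
        refine Finset.sum_congr rfl fun b _ => ?_
        rw [Finset.mul_sum]
        refine Finset.sum_congr rfl fun v _ => ?_
        rw [hc]
        have h1 : (fun j : Fin m => (Fin.cons b v : Fin (m+1) → Bool) j.succ) = v := by funext j; exact Fin.cons_succ (α := fun _ : Fin (m+1) => Bool) b v j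
        rw [h1, weightE_cons, mul_ite, mul_zero]
    _ = ∑ v : Fin m → Bool, (if D v then weightE p v else 0) := by
        rw [Fintype.sum_bool, ← add_mul, hsum1 p hp0 hp1, one_mul]

lemma marg_init (p : ℝ) (hp0 : 0 ≤ p) (hp1 : p ≤ 1) (m : ℕ)
    (D : (Fin m → Bool) → Prop) [DecidablePred D] :
    ∑ w ∈ Finset.univ.filter (fun w : Fin (m + 1) → Bool => D (fun j => w j.castSucc)),
        weightE p w =
      ∑ v ∈ Finset.univ.filter D, weightE p v := by
  rw [Finset.sum_filter, Finset.sum_filter]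
  rw [← Equiv.sum_comp (snocEquiv m)
    (fun w => if D (fun j => w j.castSucc) then weightE p w else 0), Fintype.sum_prod_type]
  have hc : ∀ (v : Fin m → Bool) (b : Bool), (snocEquiv m) (v, b) = Fin.snoc v b :=
    fun _ _ => rfl
  calc ∑ v : Fin m → Bool, ∑ b : Bool,
        (if D (fun j => (snocEquiv m) (v, b) j.castSucc)
          then weightE p ((snocEquiv m) (v, b)) else 0)
      = ∑ v : Fin m → Bool, (if D v then weightE p v else 0) *
          ∑ b : Bool, (if b then ENNReal.ofReal p else ENNReal.ofReal (1 - p)) := by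
        refine Finset.sum_congr rfl fun v _ => ?_
        rw [Finset.mul_sum]
        refine Finset.sum_congr rfl fun b _ => ?_
        rw [hc]
        have h1 : (fun j : Fin m => (Fin.snoc v b : Fin (m+1) → Bool) j.castSucc) = v := by funext j; exact Fin.snoc_castSucc (α := fun _ : Fin (m+1) => Bool) b v j
        rw [h1, weightE_snoc, ite_mul, zero_mul]
    _ = ∑ v : Fin m → Bool, (if D v then weightE p v else 0) := by
        refine Finset.sum_congr rfl fun v _ => ?_
        rw [Fintype.sum_bool, hsum1 p hp0 hp1, mul_one]

/-! ### glue lemmas -/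

lemma out_succ (n : ℕ) (y : ℤ → Bool) (i : ℤ) :
    L^[n + 1] y i = rule184 (L^[n] y (i - 1)) (L^[n] y i) (L^[n] y (i + 1)) := by
  rw [Function.iterate_succ_apply']
  rfl

lemma out_pad (n : ℕ) (a : ℤ) (m : ℕ) (x : ℤ → Bool) (i : ℤ)
    (h1 : a ≤ i - n) (h2 : i + n < a + m) :
    L^[n] x i = L^[n] (pad a m (res a m x)) i :=
  out_local n x _ i fun j hj1 hj2 => (pad_res_agree a m x j (by omega) (by omega)).symm

lemma pad_succ (a : ℤ) (m : ℕ) (w : Fin m → Bool) :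
    pad a m w = fun j => pad (a + 1) m w (j + 1) := by
  funext j
  unfold pad
  simp only [show j + 1 - (a + 1) = j - a from by ring]

lemma out_pad_shift (n : ℕ) (a : ℤ) (m : ℕ) (w : Fin m → Bool) (i : ℤ) :
    L^[n] (pad a m w) i = L^[n] (pad (a + 1) m w) (i + 1) := by
  rw [pad_succ a m w]
  exact out_shift n (pad (a + 1) m w) i

lemma pad_tail (a : ℤ) (m : ℕ) (w : Fin (m + 1) → Bool) (i : ℤ)
    (h1 : a + 1 ≤ i) (h2 : i < a + 1 + m) :
    pad a (m + 1) w i = pad (a + 1) m (fun q => w q.succ) i := by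
  obtain ⟨i', hi'⟩ : ∃ i' : ℕ, i - (a + 1) = (i' : ℤ) :=
    ⟨(i - (a + 1)).toNat, (Int.toNat_of_nonneg (by omega)).symm⟩
  have him : i' < m := by omega
  have e1 : i = a + ((i' + 1 : ℕ) : ℤ) := by push_cast; omega
  have e2 : i = (a + 1) + ((i' : ℕ) : ℤ) := by omega
  calc pad a (m + 1) w i = pad a (m + 1) w (a + ((i' + 1 : ℕ) : ℤ)) := by rw [← e1]
    _ = w ⟨i' + 1, by omega⟩ := by rw [pad_apply, dif_pos (show i' + 1 < m + 1 by omega)]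
    _ = (fun q : Fin m => w q.succ) ⟨i', him⟩ := rfl
    _ = pad (a + 1) m (fun q => w q.succ) ((a + 1) + ((i' : ℕ) : ℤ)) := by
        rw [pad_apply, dif_pos him]
    _ = pad (a + 1) m (fun q => w q.succ) i := by rw [← e2]

lemma pad_init (a : ℤ) (m : ℕ) (w : Fin (m + 1) → Bool) (i : ℤ)
    (h1 : a ≤ i) (h2 : i < a + m) :
    pad a (m + 1) w i = pad a m (fun q => w q.castSucc) i := by
  obtain ⟨i', hi'⟩ : ∃ i' : ℕ, i - a = (i' : ℤ) :=
    ⟨(i - a).toNat, (Int.toNat_of_nonneg (by omega)).symm⟩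
  have him : i' < m := by omega
  have e1 : i = a + ((i' : ℕ) : ℤ) := by omega
  calc pad a (m + 1) w i = pad a (m + 1) w (a + ((i' : ℕ) : ℤ)) := by rw [← e1]
    _ = w ⟨i', by omega⟩ := by rw [pad_apply, dif_pos (show i' < m + 1 by omega)]
    _ = (fun q : Fin m => w q.castSucc) ⟨i', him⟩ := rfl
    _ = pad a m (fun q => w q.castSucc) (a + ((i' : ℕ) : ℤ)) := by
        rw [pad_apply, dif_pos him]
    _ = pad a m (fun q => w q.castSucc) i := by rw [← e1]

lemma out_pad_tail (n : ℕ) (a : ℤ) (m : ℕ) (w : Fin (m + 1) → Bool) (i : ℤ)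
    (h1 : a + 1 ≤ i - n) (h2 : i + n < a + 1 + m) :
    L^[n] (pad a (m + 1) w) i = L^[n] (pad (a + 1) m (fun q => w q.succ)) i :=
  out_local n _ _ i fun j hj1 hj2 => pad_tail a m w j (by omega) (by omega)

lemma out_pad_init (n : ℕ) (a : ℤ) (m : ℕ) (w : Fin (m + 1) → Bool) (i : ℤ)
    (h1 : a ≤ i - n) (h2 : i + n < a + m) :
    L^[n] (pad a (m + 1) w) i = L^[n] (pad a m (fun q => w q.castSucc)) i :=
  out_local n _ _ i fun j hj1 hj2 => pad_init a m w j (by omega) (by omega)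

lemma PN_pad_shift (a : ℤ) (m : ℕ) (w : Fin m → Bool) :
    PN (pad a m w) a m ↔ WPN w := by
  unfold WPN
  rw [PN_iff, PN_iff]
  constructor <;> intro h k h1 h2
  · rw [← S_pad_shift a m w k]; exact h k h1 h2
  · rw [S_pad_shift a m w k]; exact h k h1 h2

lemma rule_iff_false (b1 b2 b3 : Bool) :
    rule184 b1 b2 b3 = false ↔ (b2 = true ∧ b3 = false) ∨ (b2 = false ∧ b1 = false) := by
  cases b1 <;> cases b2 <;> cases b3 <;> simp [rule184]

lemma pair_iff (b0 b1 : Bool) :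
    ((b0 = true ∧ b1 = false) ∨ (b0 = false ∧ b1 = false)) ↔ b1 = false := by
  cases b0 <;> cases b1 <;> simp

lemma ones_le {m : ℕ} (w : Fin m → Bool) : ones w ≤ m := by
  unfold ones
  calc ∑ j : Fin m, (if w j then 1 else 0) ≤ ∑ _j : Fin m, 1 :=
        Finset.sum_le_sum fun j _ => by split <;> omega
  _ = m := by simp

lemma toReal_weightE (p : ℝ) (hp0 : 0 ≤ p) (hp1 : p ≤ 1) {m : ℕ} (w : Fin m → Bool) :
    (weightE p w).toReal = p ^ (ones w) * (1 - p) ^ (m - ones w) := by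
  unfold weightE
  rw [ENNReal.toReal_prod]
  have h1 : ∀ j : Fin m, ((if w j then ENNReal.ofReal p else ENNReal.ofReal (1 - p)).toReal)
      = (if w j then p else (1 - p)) := by
    intro j
    split <;> [exact ENNReal.toReal_ofReal hp0; exact ENNReal.toReal_ofReal (by linarith)]
  rw [Finset.prod_congr rfl fun j _ => h1 j, Finset.prod_ite (fun _ => p) (fun _ => (1 - p)),
    Finset.prod_const, Finset.prod_const]
  have hones : (Finset.univ.filter (fun j => w j = true)).card = ones w := by
    rw [Finset.card_filter]
    unfold ones
    exact Finset.sum_congr rfl fun j _ => by split <;> simp_all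
  have hcards := Finset.card_filter_add_card_filter_not
    (s := (Finset.univ : Finset (Fin m))) (p := fun j => w j = true)
  rw [Finset.card_univ, Fintype.card_fin] at hcards
  rw [hones] at hcards
  rw [hones]
  have hexp : (Finset.univ.filter (fun j => ¬ w j = true)).card = m - ones w := by omega
  rw [hexp]

lemma cnt_real (p : ℝ) (n k : ℕ) (hk : k ≤ n) :
    (cnt (2 * n + 2) k : ℝ) =
      ((n + 1 - k : ℕ) : ℝ) / ((n : ℝ) + 1) * ((2 * n + 2).choose k : ℝ) := by
  have hz := cnt_formula (2 * n + 2) k (by omega) (by omega)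
  have hr : (cnt (2 * n + 2) k : ℝ) * ((2 : ℝ) * n + 2) + 2 * k * ((2 * n + 2).choose k : ℝ)
      = ((2 : ℝ) * n + 2) * ((2 * n + 2).choose k : ℝ) := by exact_mod_cast hz
  have hcast : ((n + 1 - k : ℕ) : ℝ) = (n : ℝ) + 1 - k := by
    have : k ≤ n + 1 := by omega
    push_cast [Nat.cast_sub this]
    ring
  rw [hcast]
  have hne : (n : ℝ) + 1 ≠ 0 := by positivity
  field_simp
  nlinarith [hr]

/-! ### Part 1 : single-site probability -/

lemma part1 (p : ℝ) (hp0 : 0 ≤ p) (hp1 : p ≤ 1) (μ : Measure (ℤ → Bool))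
    (hber : IsBernoulli p μ) :
    ∀ n : ℕ, μ {x | L^[n] x 0 = false} = ENNReal.ofReal (1 - p) := by
  intro n
  induction n with
  | zero =>
    simp only [Function.iterate_zero, id]
    have hset : {x : ℤ → Bool | x 0 = false} =
        {x : ℤ → Bool | ∀ i ∈ ({0} : Finset ℤ), x i = (fun _ => false) i} := by
      ext x
      simp
    rw [hset, hber {0} (fun _ => false)]
    simp
  | succ n ih =>
    -- abbreviations
    have hWIN := WIN p μ hber (-(n : ℤ) - 1) (2 * n + 1 + 1 + 1)
      (fun x => L^[n + 1] x 0 = false) ?hloc3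
    case hloc3 =>
      intro x
      show L^[n + 1] x 0 = false ↔
        L^[n + 1] (pad (-(n : ℤ) - 1) (2 * n + 1 + 1 + 1)
          (res (-(n : ℤ) - 1) (2 * n + 1 + 1 + 1) x)) 0 = false
      rw [← out_pad (n + 1) (-(n : ℤ) - 1) (2 * n + 1 + 1 + 1) x 0
        (by push_cast; omega) (by push_cast; omega)]
    rw [hWIN]
    -- tail / init bridges
    have ht : ∀ (w : Fin (2 * n + 1 + 1 + 1) → Bool) (i : ℤ), -(n : ℤ) ≤ i - n →
        i + n < -(n : ℤ) + (2 * n + 1 + 1) →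
        L^[n] (pad (-(n : ℤ) - 1) (2 * n + 1 + 1 + 1) w) i =
          L^[n] (pad (-(n : ℤ)) (2 * n + 1 + 1) (fun q => w q.succ)) i := by
      intro w i c1 c2
      have := out_pad_tail n (-(n : ℤ) - 1) (2 * n + 1 + 1) w i
        (by push_cast at c1 ⊢; omega) (by push_cast at c2 ⊢; omega)
      rwa [show (-(n : ℤ) - 1) + 1 = -(n : ℤ) from by ring] at this
    have hi : ∀ (w : Fin (2 * n + 1 + 1 + 1) → Bool) (i : ℤ), -(n : ℤ) - 1 ≤ i - n →
        i + n < -(n : ℤ) - 1 + (2 * n + 1 + 1) →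
        L^[n] (pad (-(n : ℤ) - 1) (2 * n + 1 + 1 + 1) w) i =
          L^[n] (pad (-(n : ℤ) - 1) (2 * n + 1 + 1) (fun q => w q.castSucc)) i := by
      intro w i c1 c2
      exact out_pad_init n (-(n : ℤ) - 1) (2 * n + 1 + 1) w i
        (by push_cast at c1 ⊢; omega) (by push_cast at c2 ⊢; omega)
    -- rewrite the filter with the disjunction predicate
    have hfilter : Finset.univ.filter
        (fun w : Fin (2 * n + 1 + 1 + 1) → Bool =>
          L^[n + 1] (pad (-(n : ℤ) - 1) (2 * n + 1 + 1 + 1) w) 0 = false) =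
        Finset.univ.filter (fun w : Fin (2 * n + 1 + 1 + 1) → Bool =>
          (L^[n] (pad (-(n : ℤ)) (2 * n + 1 + 1) (fun q => w q.succ)) 0 = true ∧
            L^[n] (pad (-(n : ℤ)) (2 * n + 1 + 1) (fun q => w q.succ)) 1 = false) ∨
          (L^[n] (pad (-(n : ℤ) - 1) (2 * n + 1 + 1) (fun q => w q.castSucc)) 0 = false ∧
            L^[n] (pad (-(n : ℤ) - 1) (2 * n + 1 + 1) (fun q => w q.castSucc)) (-1) = false)) := by
      refine Finset.filter_congr fun w _ => ?_
      rw [out_succ n (pad (-(n : ℤ) - 1) (2 * n + 1 + 1 + 1) w) 0,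
        show (0 : ℤ) - 1 = -1 from by norm_num, show (0 : ℤ) + 1 = 1 from by norm_num,
        rule_iff_false]
      refine or_congr ?_ ?_
      · rw [ht w 0 (by omega) (by push_cast; omega), ht w 1 (by omega) (by push_cast; omega)]
      · rw [hi w 0 (by omega) (by push_cast; omega), hi w (-1) (by omega) (by push_cast; omega)]
    rw [hfilter, Finset.filter_or, Finset.sum_union ?hdisj1]
    case hdisj1 =>
      refine Finset.disjoint_left.mpr fun w hw1 hw2 => ?_
      simp only [Finset.mem_filter, Finset.mem_univ, true_and] at hw1 hw2
      have hbr : L^[n] (pad (-(n : ℤ)) (2 * n + 1 + 1) (fun q => w q.succ)) 0 =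
          L^[n] (pad (-(n : ℤ) - 1) (2 * n + 1 + 1) (fun q => w q.castSucc)) 0 := by
        rw [← ht w 0 (by omega) (by push_cast; omega), hi w 0 (by omega) (by push_cast; omega)]
      rw [hbr, hw2.1] at hw1
      exact absurd hw1.1 (by simp)
    rw [marg_tail p hp0 hp1 (2 * n + 1 + 1)
      (fun v => L^[n] (pad (-(n : ℤ)) (2 * n + 1 + 1) v) 0 = true ∧
        L^[n] (pad (-(n : ℤ)) (2 * n + 1 + 1) v) 1 = false)]
    rw [marg_init p hp0 hp1 (2 * n + 1 + 1)
      (fun v => L^[n] (pad (-(n : ℤ) - 1) (2 * n + 1 + 1) v) 0 = false ∧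
        L^[n] (pad (-(n : ℤ) - 1) (2 * n + 1 + 1) v) (-1) = false)]
    -- shift the second filter
    have hshift : Finset.univ.filter
        (fun v : Fin (2 * n + 1 + 1) → Bool =>
          L^[n] (pad (-(n : ℤ) - 1) (2 * n + 1 + 1) v) 0 = false ∧
          L^[n] (pad (-(n : ℤ) - 1) (2 * n + 1 + 1) v) (-1) = false) =
        Finset.univ.filter (fun v : Fin (2 * n + 1 + 1) → Bool =>
          L^[n] (pad (-(n : ℤ)) (2 * n + 1 + 1) v) 0 = false ∧
          L^[n] (pad (-(n : ℤ)) (2 * n + 1 + 1) v) 1 = false) := by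
      refine Finset.filter_congr fun v _ => ?_
      have hs0 := out_pad_shift n (-(n : ℤ) - 1) (2 * n + 1 + 1) v (-1)
      have hs1 := out_pad_shift n (-(n : ℤ) - 1) (2 * n + 1 + 1) v 0
      rw [show (-1 : ℤ) + 1 = 0 from by norm_num,
        show (-(n : ℤ) - 1) + 1 = -(n : ℤ) from by ring] at hs0
      rw [show (0 : ℤ) + 1 = 1 from by norm_num,
        show (-(n : ℤ) - 1) + 1 = -(n : ℤ) from by ring] at hs1
      rw [hs0, hs1]
      tauto
    rw [hshift]
    rw [← Finset.sum_union ?hdisj2, ← Finset.filter_or]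
    case hdisj2 =>
      refine Finset.disjoint_left.mpr fun v hv1 hv2 => ?_
      simp only [Finset.mem_filter, Finset.mem_univ, true_and] at hv1 hv2
      rw [hv2.1] at hv1
      exact absurd hv1.1 (by simp)
    have hpair : Finset.univ.filter
        (fun v : Fin (2 * n + 1 + 1) → Bool =>
          (L^[n] (pad (-(n : ℤ)) (2 * n + 1 + 1) v) 0 = true ∧
            L^[n] (pad (-(n : ℤ)) (2 * n + 1 + 1) v) 1 = false) ∨
          (L^[n] (pad (-(n : ℤ)) (2 * n + 1 + 1) v) 0 = false ∧
            L^[n] (pad (-(n : ℤ)) (2 * n + 1 + 1) v) 1 = false)) =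
        Finset.univ.filter (fun v : Fin (2 * n + 1 + 1) → Bool =>
          L^[n] (pad (-(n : ℤ)) (2 * n + 1) (fun q => v q.succ)) 0 = false) := by
      refine Finset.filter_congr fun v _ => ?_
      rw [pair_iff]
      have h1 := out_pad_tail n (-(n : ℤ)) (2 * n + 1) v 1
        (by push_cast; omega) (by push_cast; omega)
      have h2 := out_pad_shift n (-(n : ℤ)) (2 * n + 1) (fun q => v q.succ) 0
      rw [show (0 : ℤ) + 1 = 1 from by norm_num] at h2
      rw [h1, ← h2]
    rw [hpair, marg_tail p hp0 hp1 (2 * n + 1)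
      (fun u => L^[n] (pad (-(n : ℤ)) (2 * n + 1) u) 0 = false)]
    have hWIN2 := WIN p μ hber (-(n : ℤ)) (2 * n + 1)
      (fun x => L^[n] x 0 = false) ?hloc1
    case hloc1 =>
      intro x
      show L^[n] x 0 = false ↔
        L^[n] (pad (-(n : ℤ)) (2 * n + 1) (res (-(n : ℤ)) (2 * n + 1) x)) 0 = false
      rw [← out_pad n (-(n : ℤ)) (2 * n + 1) x 0 (by omega) (by push_cast; omega)]
    rw [← hWIN2]
    exact ih

/-! ### Part 2 : pair probability -/

lemma part2sum (p : ℝ) (hp0 : 0 ≤ p) (hp1 : p ≤ 1) (μ : Measure (ℤ → Bool))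
    (hber : IsBernoulli p μ) (n : ℕ) :
    μ {x | L^[n] x 0 = false ∧ L^[n] x 1 = false} =
      ∑ w ∈ Finset.univ.filter (fun w : Fin (2 * n + 2) → Bool => WPN w), weightE p w := by
  have hWIN := WIN p μ hber (-(n : ℤ)) (2 * n + 2)
    (fun x => L^[n] x 0 = false ∧ L^[n] x 1 = false) ?hloc
  case hloc =>
    intro x
    show (L^[n] x 0 = false ∧ L^[n] x 1 = false) ↔
      (L^[n] (pad (-(n : ℤ)) (2 * n + 2) (res (-(n : ℤ)) (2 * n + 2) x)) 0 = false ∧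
        L^[n] (pad (-(n : ℤ)) (2 * n + 2) (res (-(n : ℤ)) (2 * n + 2) x)) 1 = false)
    rw [← out_pad n (-(n : ℤ)) (2 * n + 2) x 0 (by omega) (by push_cast; omega),
      ← out_pad n (-(n : ℤ)) (2 * n + 2) x 1 (by omega) (by push_cast; omega)]
  rw [hWIN]
  congr 1
  refine Finset.filter_congr fun w _ => ?_
  exact (charac n (pad (-(n : ℤ)) (2 * n + 2) w)).trans (PN_pad_shift (-(n : ℤ)) (2 * n + 2) w)

lemma part2real (p : ℝ) (hp0 : 0 ≤ p) (hp1 : p ≤ 1) (μ : Measure (ℤ → Bool))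
    (hber : IsBernoulli p μ) (n : ℕ) :
    (μ {x | L^[n] x 0 = false ∧ L^[n] x 1 = false}).toReal =
      ∑ j ∈ Finset.Icc 1 (n + 1),
        (j : ℝ) / ((n : ℝ) + 1) * (Nat.choose (2 * n + 2) (n + 1 - j) : ℝ) *
          p ^ (n + 1 - j) * (1 - p) ^ (n + 1 + j) := by
  rw [part2sum p hp0 hp1 μ hber n,
    ENNReal.toReal_sum fun w _ => weightE_ne_top p w]
  calc ∑ w ∈ Finset.univ.filter (fun w : Fin (2 * n + 2) → Bool => WPN w),
        (weightE p w).toReal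
      = ∑ w ∈ Finset.univ.filter (fun w : Fin (2 * n + 2) → Bool => WPN w),
          p ^ (ones w) * (1 - p) ^ (2 * n + 2 - ones w) :=
        Finset.sum_congr rfl fun w _ => toReal_weightE p hp0 hp1 w
    _ = ∑ k ∈ Finset.range (2 * n + 2 + 1),
          ∑ w ∈ (Finset.univ.filter (fun w : Fin (2 * n + 2) → Bool => WPN w)).filter
            (fun w => ones w = k), p ^ (ones w) * (1 - p) ^ (2 * n + 2 - ones w) := by
        rw [Finset.sum_fiberwise_of_maps_to]
        intro w _
        simp only [Finset.mem_range]
        have := ones_le w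
        omega
    _ = ∑ k ∈ Finset.range (2 * n + 2 + 1),
          (cnt (2 * n + 2) k : ℝ) * (p ^ k * (1 - p) ^ (2 * n + 2 - k)) := by
        refine Finset.sum_congr rfl fun k _ => ?_
        rw [Finset.filter_filter]
        have hterm : ∀ w ∈ Finset.univ.filter
            (fun w : Fin (2 * n + 2) → Bool => WPN w ∧ ones w = k),
            p ^ (ones w) * (1 - p) ^ (2 * n + 2 - ones w) =
              p ^ k * (1 - p) ^ (2 * n + 2 - k) := by
          intro w hw
          simp only [Finset.mem_filter] at hw
          rw [hw.2.2]
        rw [Finset.sum_congr rfl hterm, Finset.sum_const]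
        rw [nsmul_eq_mul]
        rfl
    _ = ∑ k ∈ Finset.range (n + 1),
          (cnt (2 * n + 2) k : ℝ) * (p ^ k * (1 - p) ^ (2 * n + 2 - k)) := by
        refine (Finset.sum_subset ?_ ?_).symm
        · intro k hk
          simp only [Finset.mem_range] at hk ⊢
          omega
        · intro k hk1 hk2
          simp only [Finset.mem_range] at hk1 hk2
          rw [cnt_eq_zero (2 * n + 2) k (by omega) (by omega)]
          norm_num
    _ = ∑ j ∈ Finset.Icc 1 (n + 1),
          (j : ℝ) / ((n : ℝ) + 1) * (Nat.choose (2 * n + 2) (n + 1 - j) : ℝ) *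
            p ^ (n + 1 - j) * (1 - p) ^ (n + 1 + j) := by
        refine Finset.sum_nbij' (fun k => n + 1 - k) (fun j => n + 1 - j) ?_ ?_ ?_ ?_ ?_
        · intro k hk
          simp only [Finset.mem_range] at hk
          simp only [Finset.mem_Icc]
          omega
        · intro j hj
          simp only [Finset.mem_Icc] at hj
          simp only [Finset.mem_range]
          omega
        · intro k hk
          simp only [Finset.mem_range] at hk
          show n + 1 - (n + 1 - k) = k
          omega
        · intro j hj
          simp only [Finset.mem_Icc] at hj
          show n + 1 - (n + 1 - j) = j
          omega
        · intro k hk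
          simp only [Finset.mem_range] at hk
          have e1 : n + 1 - (n + 1 - k) = k := by omega
          have e2 : n + 1 + (n + 1 - k) = 2 * n + 2 - k := by omega
          rw [e1, e2, cnt_real p n k (by omega)]
          ring

end R184

/-- for ECA rule 184 started from the Bernoulli measure `μ_p`,
`P_n(0) = 1 − p` and `P_n(00)` is given by a ballistic-annihilation sum. -/
theorem rule184_prob_general_p
    (p : ℝ) (hp0 : 0 ≤ p) (hp1 : p ≤ 1)
    (μ : Measure (ℤ → Bool)) (hprob : IsProbabilityMeasure μ) (hber : IsBernoulli p μ) :
    ∀ n : ℕ,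
      (μ ((eca rule184)^[n] ⁻¹' cylinder [false])).toReal = 1 - p ∧
      (μ ((eca rule184)^[n] ⁻¹' cylinder [false, false])).toReal =
        ∑ j ∈ Finset.Icc 1 (n + 1),
          (j : ℝ) / ((n : ℝ) + 1) * (Nat.choose (2 * n + 2) (n + 1 - j) : ℝ) *
            p ^ (n + 1 - j) * (1 - p) ^ (n + 1 + j) := by
  intro n
  have hset1 : (eca rule184)^[n] ⁻¹' cylinder [false] =
      {x : ℤ → Bool | (eca rule184)^[n] x 0 = false} := by
    ext x
    simp only [Set.mem_preimage, _root_.cylinder, Set.mem_setOf_eq]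
    constructor
    · intro h
      simpa using h ⟨0, by norm_num⟩
    · intro h j
      fin_cases j
      simpa using h
  have hset2 : (eca rule184)^[n] ⁻¹' cylinder [false, false] =
      {x : ℤ → Bool | (eca rule184)^[n] x 0 = false ∧ (eca rule184)^[n] x 1 = false} := by
    ext x
    simp only [Set.mem_preimage, _root_.cylinder, Set.mem_setOf_eq]
    constructor
    · intro h
      exact ⟨by simpa using h ⟨0, by norm_num⟩, by simpa using h ⟨1, by norm_num⟩⟩
    · rintro ⟨h0, h1⟩ j
      fin_cases j
      · simpa using h0
      · simpa using h1
  constructor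
  · have h1 := R184.part1 p hp0 hp1 μ hber n
    have heq : μ ((eca rule184)^[n] ⁻¹' cylinder [false]) = ENNReal.ofReal (1 - p) := by
      rw [hset1]
      exact h1
    rw [heq, ENNReal.toReal_ofReal (by linarith)]
  · have h2 := R184.part2real p hp0 hp1 μ hber n
    rw [hset2]
    exact h2
end

section
/- Let F be the global map of ECA rule 184, let p ∈ [0,1], and let P_n(00) = μ_p((F^[n])⁻¹([00])) be the probability of the word 00 after n iterations starting from the Bernoulli measure μ_p. Then lim_{n→∞} P_n(00) = 1 − 2p if p < 1/2, and lim_{n→∞} P_n(00) = 0 if p ≥ 1/2. -/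
open MeasureTheory Filter

/-!
Read a configuration as a walk with an up-step at every `0` and a down-step at every `1`, and
let `g` be its height function. One step of rule 184 replaces `g` by
`k ↦ min (g (k - 1)) (g (k + 1))`, so after `n` steps the height at `k` is the minimum of
`g (k - n + 2 i)`, `0 ≤ i ≤ n`. Hence the word `00` occupies sites `0, 1` at time `n` iff the
walk read from site `-n` stays strictly above its starting level during its first `2n + 2` steps.
By the cycle lemma, exactly `max S 0` of the `m` cyclic rotations of a word of length `m` with
step sum `S` give such a walk, so `m • P_m = E[max S_m 0]` for a sum `S_m` of `m` i.i.d. steps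
of mean `1 - 2p` and variance `4p(1 - p)`. Cauchy–Schwarz then squeezes `P_m` between
`max (1 - 2p) 0` and `max (1 - 2p) 0 + √(4p(1 - p) / m)`.
-/

open Finset Function
open scoped Topology Fin.NatCast

namespace Rule184

theorem exists_sub_pred_eq {M : Type*} [AddCommGroup M] (e : ℤ → M) :
    ∃ g : ℤ → M, ∀ k, g k - g (k - 1) = e k := by
  refine ⟨fun k => ∑ t ∈ Ioc 0 k, e t - ∑ t ∈ Ioc k 0, e t, fun k => ?_⟩
  simp only
  rcases le_or_gt k 0 with hk | hk
  · have h : Ioc (k - 1) 0 = insert k (Ioc k 0) := by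
      ext; simp only [mem_Ioc, mem_insert]; omega
    rw [h, sum_insert (by simp), Ioc_eq_empty (a := 0) (b := k) (by omega),
      Ioc_eq_empty (a := 0) (b := k - 1) (by omega)]
    abel
  · have h : Ioc 0 k = insert k (Ioc 0 (k - 1)) := by
      ext; simp only [mem_Ioc, mem_insert]; omega
    rw [h, sum_insert (by simp), Ioc_eq_empty (a := k) (b := 0) (by omega),
      Ioc_eq_empty (a := k - 1) (b := 0) (by omega)]
    abel

def walkStep (b : Bool) : ℤ := if b then -1 else 1

theorem walkStep_eq_one_or (b : Bool) : walkStep b = 1 ∨ walkStep b = -1 := by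
  cases b <;> simp [walkStep]

def IsHeight (g : ℤ → ℤ) (x : ℤ → Bool) : Prop :=
  ∀ k, g k - g (k - 1) = walkStep (x k)

theorem exists_isHeight (x : ℤ → Bool) : ∃ g, IsHeight g x :=
  exists_sub_pred_eq _

def neighborMin (g : ℤ → ℤ) (k : ℤ) : ℤ := min (g (k - 1)) (g (k + 1))

section Height

variable {g : ℤ → ℤ} {x : ℤ → Bool}

theorem IsHeight.neighborMin (hg : IsHeight g x) :
    IsHeight (neighborMin g) (eca rule184 x) := by
  intro k
  have h₁ := hg (k - 1)
  have h₂ := hg k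
  have h₃ := hg (k + 1)
  simp only [Rule184.neighborMin, eca, rule184, sub_add_cancel, add_sub_cancel_right] at h₃ ⊢
  revert h₁ h₂ h₃
  cases x (k - 1) <;> cases x k <;> cases x (k + 1) <;> simp [walkStep] <;> omega

theorem IsHeight.iterate_neighborMin (hg : IsHeight g x) (n : ℕ) :
    IsHeight (Rule184.neighborMin^[n] g) ((eca rule184)^[n] x) := by
  induction n with
  | zero => exact hg
  | succ n ih =>
    rw [iterate_succ_apply', iterate_succ_apply']
    exact ih.neighborMin

theorem IsHeight.sub_eq_sum (hg : IsHeight g x) (a : ℤ) (u : ℕ) :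
    g (a - 1 + u) - g (a - 1) = ∑ j ∈ range u, walkStep (x (a + j)) := by
  induction u with
  | zero => simp
  | succ u ih =>
    rw [sum_range_succ, ← ih, ← hg (a + u)]
    push_cast
    ring_nf

theorem IsHeight.mem_cylinder_false_false_iff {y : ℤ → Bool} (hg : IsHeight g y) :
    y ∈ cylinder [false, false] ↔ g 1 = g (-1) + 2 := by
  have h₀ := hg 0
  have h₁ := hg 1
  have hcyl : y ∈ cylinder [false, false] ↔ y 0 = false ∧ y 1 = false :=
    ⟨fun h => ⟨h 0, h 1⟩, fun ⟨h₀, h₁⟩ j => by fin_cases j <;> assumption⟩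
  simp only [hcyl, zero_sub, sub_self] at h₀ h₁ ⊢
  revert h₀ h₁
  cases y 0 <;> cases y 1 <;> simp [walkStep] <;> omega

end Height

theorem neighborMin_iterate_apply (g : ℤ → ℤ) (n : ℕ) (k : ℤ) :
    neighborMin^[n] g k =
      (range (n + 1)).inf' nonempty_range_add_one fun i => g (k - n + 2 * i) := by
  induction n generalizing k with
  | zero => simp
  | succ n ih =>
    have hleft (i : ℕ) : k - 1 - n + 2 * i = k - ↑(n + 1) + 2 * ↑i := by push_cast; ring
    have hright (i : ℕ) : k + 1 - n + 2 * i = k - ↑(n + 1) + 2 * ↑(i + 1) := by push_cast; ring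
    rw [iterate_succ_apply', neighborMin, ih, ih]
    simp only [hleft, hright]
    apply le_antisymm
    · refine le_inf' _ _ fun i hi => ?_
      rcases i with _ | i
      · exact min_le_of_left_le (inf'_le (b := 0) _ (by simp))
      · exact min_le_of_right_le (inf'_le (b := i) _ (by simpa using hi))
    · exact le_min (le_inf' _ _ fun i hi => inf'_le (b := i) _ (by simp at hi ⊢; omega))
        (le_inf' _ _ fun i hi => inf'_le (b := i + 1) _ (by simp at hi ⊢; omega))

def StaysPositive (e : ℕ → ℤ) (m : ℕ) : Prop :=
  ∀ u ∈ Icc 1 m, 0 < ∑ j ∈ range u, e j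

instance (e : ℕ → ℤ) (m : ℕ) : Decidable (StaysPositive e m) :=
  inferInstanceAs (Decidable (∀ u ∈ Icc 1 m, 0 < ∑ j ∈ range u, e j))

theorem staysPositive_congr {e e' : ℕ → ℤ} {m : ℕ} (h : ∀ j < m, e j = e' j) :
    StaysPositive e m ↔ StaysPositive e' m := by
  refine forall₂_congr fun u hu => ?_
  rw [sum_congr rfl fun j hj => h j ((mem_range.1 hj).trans_le (mem_Icc.1 hu).2)]

theorem inf'_succ_eq_inf'_add_two_iff {a : ℕ → ℤ} (N : ℕ) (h₁ : a 1 ≤ a 0 + 2) :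
    (range (N + 1)).inf' nonempty_range_add_one (fun i => a (i + 1)) =
        (range (N + 1)).inf' nonempty_range_add_one a + 2 ↔
      ∀ i ∈ range (N + 1), a 0 + 2 ≤ a (i + 1) := by
  constructor
  · intro h i hi
    obtain ⟨j, hj, hmin⟩ := exists_mem_eq_inf' nonempty_range_add_one a
    have hmin₀ : (range (N + 1)).inf' nonempty_range_add_one a = a 0 := by
      rcases j with _ | j
      · exact hmin
      · have := inf'_le (fun i => a (i + 1)) (s := range (N + 1)) (b := j)
          (mem_range.2 (by simp at hj; omega))
        omega
    have := inf'_le (fun i => a (i + 1)) hi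
    omega
  · intro h
    have hmin₀ : (range (N + 1)).inf' nonempty_range_add_one a = a 0 := by
      refine le_antisymm (inf'_le _ (by simp)) (le_inf' _ _ fun i hi => ?_)
      rcases i with _ | i
      · rfl
      · have := h i (mem_range.2 (by simp at hi; omega))
        omega
    have hmin₁ : (range (N + 1)).inf' nonempty_range_add_one (fun i => a (i + 1)) = a 0 + 2 :=
      le_antisymm (inf'_le_of_le _ (by simp : 0 ∈ range (N + 1)) h₁) (le_inf' _ _ h)
    omega

theorem forall_even_le_iff_forall_lt {s : ℕ → ℤ}
    (hstep : ∀ u, s (u + 1) = s u + 1 ∨ s (u + 1) = s u - 1) (N : ℕ) :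
    (∀ i ∈ range (N + 1), s 0 + 2 ≤ s (2 * (i + 1))) ↔ ∀ u ∈ Icc 1 (2 * N + 2), s 0 < s u := by
  have hparity : ∀ u, 2 ∣ s u - s 0 - u := by
    intro u
    induction u with
    | zero => simp
    | succ u ih => rcases hstep u with h | h <;> push_cast <;> omega
  constructor
  · intro heven u hu
    rw [mem_Icc] at hu
    obtain ⟨i, rfl | rfl⟩ := Nat.even_or_odd' u
    · have := heven (i - 1) (mem_range.2 (by omega))
      rw [show 2 * (i - 1 + 1) = 2 * i by omega] at this
      omega
    · have := heven i (mem_range.2 (by omega))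
      rw [show 2 * (i + 1) = 2 * i + 1 + 1 by ring] at this
      rcases hstep (2 * i + 1) with h | h <;> omega
  · intro hpos i hi
    have := hpos (2 * (i + 1)) (mem_Icc.2 ⟨by omega, by simp at hi; omega⟩)
    have := hparity (2 * (i + 1))
    push_cast at this
    omega

theorem iterate_mem_cylinder_false_false_iff (x : ℤ → Bool) (n : ℕ) :
    (eca rule184)^[n] x ∈ cylinder [false, false] ↔
      StaysPositive (fun j => walkStep (x (-n + j))) (2 * n + 2) := by
  obtain ⟨g, hg⟩ := exists_isHeight x
  set s : ℕ → ℤ := fun u => g (-n - 1 + u) with hs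
  have hsum (u : ℕ) : s u - s 0 = ∑ j ∈ range u, walkStep (x (-n + j)) := by
    simpa [hs] using hg.sub_eq_sum (-n) u
  have hstep (u : ℕ) : s (u + 1) = s u + 1 ∨ s (u + 1) = s u - 1 := by
    have h := hsum (u + 1)
    rw [sum_range_succ, ← hsum u] at h
    rcases walkStep_eq_one_or (x (-n + u)) with h' | h' <;> omega
  have hs₂ : s 2 ≤ s 0 + 2 := by
    have h₀₁ := hstep 0
    have h₁₂ := hstep 1
    norm_num at h₀₁ h₁₂
    omega
  have hright : (fun i : ℕ => g (1 - n + 2 * i)) = fun i => s (2 * (i + 1)) := by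
    funext i; simp only [hs]; push_cast; ring_nf
  have hleft : (fun i : ℕ => g (-1 - n + 2 * i)) = fun i => s (2 * i) := by
    funext i; simp only [hs]; push_cast; ring_nf
  rw [(hg.iterate_neighborMin n).mem_cylinder_false_false_iff, neighborMin_iterate_apply,
    neighborMin_iterate_apply, hright, hleft,
    inf'_succ_eq_inf'_add_two_iff (a := fun i => s (2 * i)) n hs₂,
    forall_even_le_iff_forall_lt hstep]
  exact forall₂_congr fun u _ => by rw [← hsum, sub_pos]

section CycleLemma

variable {e : ℕ → ℤ} {m : ℕ}

theorem sum_range_add_of_periodic (hper : Periodic e m) (u : ℕ) :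
    ∑ i ∈ range (u + m), e i = ∑ i ∈ range u, e i + ∑ i ∈ range m, e i := by
  rw [add_comm u m, sum_range_add, add_comm]
  exact congrArg (· + _) (sum_congr rfl fun j _ => by rw [add_comm m, hper])

theorem staysPositive_shift_iff (r : ℕ) :
    StaysPositive (fun j => e (r + j)) m ↔
      ∀ u ∈ Icc 1 m, ∑ i ∈ range r, e i < ∑ i ∈ range (r + u), e i := by
  refine forall₂_congr fun u _ => ?_
  rw [sum_range_add, lt_add_iff_pos_right]

def windowMin (e : ℕ → ℤ) (m r : ℕ) : ℤ :=
  (Icc r (r + m)).inf' (nonempty_Icc.2 (Nat.le_add_right r m)) fun u => ∑ i ∈ range u, e i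

theorem windowMin_le {r u : ℕ} (h₁ : r ≤ u) (h₂ : u ≤ r + m) :
    windowMin e m r ≤ ∑ i ∈ range u, e i :=
  inf'_le _ (mem_Icc.2 ⟨h₁, h₂⟩)

theorem windowMin_period (hper : Periodic e m) :
    windowMin e m m = windowMin e m 0 + ∑ i ∈ range m, e i := by
  apply le_antisymm
  · obtain ⟨u, hu, hmin⟩ := exists_mem_eq_inf' (nonempty_Icc.2 (Nat.le_add_right 0 m))
      fun u => ∑ i ∈ range u, e i
    rw [mem_Icc] at hu
    rw [show windowMin e m 0 = _ from hmin, ← sum_range_add_of_periodic hper]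
    exact windowMin_le (by omega) (by omega)
  · refine le_inf' _ _ fun u hu => ?_
    rw [mem_Icc] at hu
    rw [← Nat.sub_add_cancel hu.1, sum_range_add_of_periodic hper, add_le_add_iff_right]
    exact windowMin_le (by omega) (by omega)

variable (hper : Periodic e m) (hS : 0 < ∑ i ∈ range m, e i)
include hper hS

theorem windowMin_eq_min_windowMin_succ (r : ℕ) :
    windowMin e m r = min (∑ i ∈ range r, e i) (windowMin e m (r + 1)) := by
  have hm : 0 < m := Nat.pos_of_ne_zero (by rintro rfl; simp at hS)
  refine le_antisymm (le_min (windowMin_le le_rfl (by omega)) (le_inf' _ _ fun u hu => ?_))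
    (le_inf' _ _ fun u hu => ?_) <;> rw [mem_Icc] at hu
  · rcases lt_or_eq_of_le hu.2 with hlt | rfl
    · exact windowMin_le (by omega) (by omega)
    · rw [sum_range_add_of_periodic hper]
      linarith [windowMin_le (e := e) (m := m) (r := r) (u := r + 1) (by omega) (by omega)]
  · rcases eq_or_lt_of_le hu.1 with rfl | hlt
    · exact min_le_left _ _
    · exact (min_le_right _ _).trans (windowMin_le (by omega) (by omega))

theorem lt_windowMin_succ_iff (r : ℕ) :
    ∑ i ∈ range r, e i < windowMin e m (r + 1) ↔ StaysPositive (fun j => e (r + j)) m := by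
  rw [windowMin, lt_inf'_iff, staysPositive_shift_iff]
  constructor
  · intro h u hu
    rw [mem_Icc] at hu
    exact h _ (mem_Icc.2 ⟨by omega, by omega⟩)
  · intro h u hu
    rw [mem_Icc] at hu
    rcases lt_or_eq_of_le hu.2 with hlt | rfl
    · simpa [Nat.add_sub_cancel' (by omega : r ≤ u)] using
        h (u - r) (mem_Icc.2 ⟨by omega, by omega⟩)
    · have hm : 0 < m := Nat.pos_of_ne_zero (by rintro rfl; simp at hS)
      rw [sum_range_add_of_periodic hper]
      linarith [h 1 (mem_Icc.2 ⟨le_rfl, hm⟩)]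

theorem ite_staysPositive_eq_windowMin_sub (he : ∀ i, e i ≤ 1) (r : ℕ) :
    (if StaysPositive (fun j => e (r + j)) m then 1 else 0) =
      windowMin e m (r + 1) - windowMin e m r := by
  rw [windowMin_eq_min_windowMin_succ hper hS r]
  split_ifs with h <;> rw [← lt_windowMin_succ_iff hper hS] at h
  · have := windowMin_le (e := e) (m := m) (r := r + 1) (u := r + 1) le_rfl (by omega)
    rw [sum_range_succ] at this
    linarith [he r, min_eq_left h.le]
  · rw [min_eq_right (not_lt.1 h), sub_self]

end CycleLemma

theorem card_filter_staysPositive_shift {e : ℕ → ℤ} {m : ℕ} (hper : Periodic e m)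
    (he : ∀ i, e i ≤ 1) :
    #{r ∈ range m | StaysPositive (fun j => e (r + j)) m} = (∑ i ∈ range m, e i).toNat := by
  rcases le_or_gt (∑ i ∈ range m, e i) 0 with hS | hS
  · rw [Int.toNat_eq_zero.2 hS, card_eq_zero, filter_eq_empty_iff]
    intro r hr hpos
    have := (staysPositive_shift_iff r).1 hpos m (mem_Icc.2 ⟨by simp at hr; omega, le_rfl⟩)
    rw [sum_range_add_of_periodic hper] at this
    omega
  · rw [← Nat.cast_inj (R := ℤ), Int.toNat_of_nonneg hS.le, natCast_card_filter,
      sum_congr rfl fun r _ => ite_staysPositive_eq_windowMin_sub hper hS he r, sum_range_sub,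
      windowMin_period hper, add_sub_cancel_left]

section ProductWeights

variable {α : Type*} [Fintype α] {w f : α → ℝ}

theorem sum_pi_fin_succ {β : Type*} [AddCommMonoid β] {k : ℕ} (F : (Fin (k + 1) → α) → β) :
    ∑ v, F v = ∑ a, ∑ v : Fin k → α, F (Fin.cons a v) := by
  rw [← (Fin.consEquiv fun _ => α).sum_comp, Fintype.sum_prod_type]
  rfl

theorem sum_prod_weight (hw : ∑ a, w a = 1) (m : ℕ) : ∑ v : Fin m → α, ∏ i, w (v i) = 1 := by
  rw [← Fintype.sum_pow, hw, one_pow]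

theorem sum_prod_weight_mul_sum (hw : ∑ a, w a = 1) (hf : ∑ a, w a * f a = 0) (m : ℕ) :
    ∑ v : Fin m → α, (∏ i, w (v i)) * ∑ i, f (v i) = 0 := by
  induction m with
  | zero => simp
  | succ k ih =>
    have hcons (a : α) :
        ∑ v : Fin k → α, w a * (∏ i, w (v i)) * (f a + ∑ i, f (v i)) = w a * f a := by
      have hexpand (v : Fin k → α) : w a * (∏ i, w (v i)) * (f a + ∑ i, f (v i)) =
          w a * f a * ∏ i, w (v i) + w a * ((∏ i, w (v i)) * ∑ i, f (v i)) := by ring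
      rw [sum_congr rfl fun v _ => hexpand v, sum_add_distrib, ← mul_sum, ← mul_sum,
        sum_prod_weight hw, ih, mul_one, mul_zero, add_zero]
    simp only [sum_pi_fin_succ, Fin.prod_univ_succ, Fin.sum_univ_succ, Fin.cons_zero,
      Fin.cons_succ, hcons, hf]

theorem sum_prod_weight_mul_sum_sq (hw : ∑ a, w a = 1) (hf : ∑ a, w a * f a = 0) (m : ℕ) :
    ∑ v : Fin m → α, (∏ i, w (v i)) * (∑ i, f (v i)) ^ 2 = m * ∑ a, w a * f a ^ 2 := by
  induction m with
  | zero => simp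
  | succ k ih =>
    have hcons (a : α) : ∑ v : Fin k → α, w a * (∏ i, w (v i)) * (f a + ∑ i, f (v i)) ^ 2 =
        w a * f a ^ 2 + w a * (k * ∑ a, w a * f a ^ 2) := by
      have hexpand (v : Fin k → α) : w a * (∏ i, w (v i)) * (f a + ∑ i, f (v i)) ^ 2 =
          w a * f a ^ 2 * ∏ i, w (v i) + 2 * w a * f a * ((∏ i, w (v i)) * ∑ i, f (v i)) +
            w a * ((∏ i, w (v i)) * (∑ i, f (v i)) ^ 2) := by ring
      rw [sum_congr rfl fun v _ => hexpand v, sum_add_distrib, sum_add_distrib, ← mul_sum,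
        ← mul_sum, ← mul_sum, sum_prod_weight hw, sum_prod_weight_mul_sum hw hf, ih, mul_one,
        mul_zero, add_zero]
    simp only [sum_pi_fin_succ, Fin.prod_univ_succ, Fin.sum_univ_succ, Fin.cons_zero,
      Fin.cons_succ, hcons, sum_add_distrib, ← sum_mul, hw]
    push_cast
    ring

end ProductWeights

section Expectation

variable {ι : Type*} {s : Finset ι} {W Y : ι → ℝ}

theorem sum_mul_abs_le_sqrt (hW₀ : ∀ i ∈ s, 0 ≤ W i) (hW₁ : ∑ i ∈ s, W i = 1) :
    ∑ i ∈ s, W i * |Y i| ≤ √(∑ i ∈ s, W i * Y i ^ 2) := by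
  refine (le_abs_self _).trans (Real.abs_le_sqrt ?_)
  have := sum_sq_le_sum_mul_sum_of_sq_le_mul s hW₀
    (fun i hi => mul_nonneg (hW₀ i hi) (sq_nonneg (Y i))) (r := fun i => W i * |Y i|)
    fun i _ => by rw [mul_pow, sq_abs]; ring_nf; rfl
  rwa [hW₁, one_mul] at this

theorem max_le_sum_mul_max_add (hW₀ : ∀ i ∈ s, 0 ≤ W i) (hW₁ : ∑ i ∈ s, W i = 1)
    (hY : ∑ i ∈ s, W i * Y i = 0) (a : ℝ) :
    max a 0 ≤ ∑ i ∈ s, W i * max (Y i + a) 0 := by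
  have hmean : ∑ i ∈ s, W i * (Y i + a) = a := by
    rw [sum_congr rfl fun i _ => mul_add (W i) (Y i) a, sum_add_distrib, ← sum_mul, hY, hW₁]
    ring
  refine max_le ?_ (sum_nonneg fun i hi => mul_nonneg (hW₀ i hi) (le_max_right _ _))
  calc a = ∑ i ∈ s, W i * (Y i + a) := hmean.symm
    _ ≤ ∑ i ∈ s, W i * max (Y i + a) 0 :=
      sum_le_sum fun i hi => mul_le_mul_of_nonneg_left (le_max_left _ _) (hW₀ i hi)

theorem sum_mul_max_add_le (hW₀ : ∀ i ∈ s, 0 ≤ W i) (hW₁ : ∑ i ∈ s, W i = 1) (a : ℝ) :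
    ∑ i ∈ s, W i * max (Y i + a) 0 ≤ max a 0 + √(∑ i ∈ s, W i * Y i ^ 2) :=
  calc ∑ i ∈ s, W i * max (Y i + a) 0 ≤ ∑ i ∈ s, W i * (max a 0 + |Y i|) := by
        refine sum_le_sum fun i hi => mul_le_mul_of_nonneg_left ?_ (hW₀ i hi)
        exact max_le (by linarith [le_max_left a 0, le_abs_self (Y i)]) (by positivity)
    _ = max a 0 + ∑ i ∈ s, W i * |Y i| := by
        rw [sum_congr rfl fun i _ => mul_add (W i) _ _, sum_add_distrib, ← sum_mul, hW₁, one_mul]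
    _ ≤ max a 0 + √(∑ i ∈ s, W i * Y i ^ 2) := by
        gcongr; exact sum_mul_abs_le_sqrt hW₀ hW₁

end Expectation

def coinWeight (p : ℝ) (b : Bool) : ℝ := if b then p else 1 - p

section Coin

variable {p : ℝ}

theorem coinWeight_nonneg (hp0 : 0 ≤ p) (hp1 : p ≤ 1) (b : Bool) : 0 ≤ coinWeight p b := by
  cases b <;> simp [coinWeight] <;> linarith

theorem sum_coinWeight : ∑ b, coinWeight p b = 1 := by
  simp [coinWeight]

theorem sum_coinWeight_mul_walkStep_sub :
    ∑ b, coinWeight p b * (walkStep b - (1 - 2 * p)) = 0 := by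
  simp [coinWeight, walkStep]
  ring

theorem sum_coinWeight_mul_walkStep_sub_sq :
    ∑ b, coinWeight p b * (walkStep b - (1 - 2 * p)) ^ 2 = 4 * p * (1 - p) := by
  simp [coinWeight, walkStep]
  ring

end Coin

/-- `v j` reads the word cyclically (`j : ℕ` is cast to `Fin m`); the walk only looks at
`j < m`, but the cyclic reading is what lets rotations of `v` act on it. -/
def positiveWalkProb (p : ℝ) (m : ℕ) [NeZero m] : ℝ :=
  ∑ v : Fin m → Bool with StaysPositive (fun j => walkStep (v j)) m, ∏ i, coinWeight p (v i)

section PositiveWalk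

variable (p : ℝ) {m : ℕ} [NeZero m]

theorem positiveWalkProb_eq_sum_rotate (r : ℕ) :
    positiveWalkProb p m = ∑ v : Fin m → Bool,
      if StaysPositive (fun j => walkStep (v ↑(r + j))) m then ∏ i, coinWeight p (v i) else 0 := by
  rw [positiveWalkProb, sum_filter,
    ← ((Equiv.addLeft (r : Fin m)).symm.arrowCongr (Equiv.refl Bool)).sum_comp]
  refine sum_congr rfl fun v _ => ?_
  simp only [Equiv.arrowCongr_apply, Equiv.symm_symm, Equiv.coe_refl, comp_apply, id,
    Equiv.coe_addLeft, Nat.cast_add]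
  exact if_congr Iff.rfl (Equiv.prod_comp (Equiv.addLeft (r : Fin m)) fun i => coinWeight p (v i))
    rfl

theorem card_filter_staysPositive_rotate (v : Fin m → Bool) :
    (#{r ∈ range m | StaysPositive (fun j => walkStep (v ↑(r + j))) m} : ℝ) =
      max (∑ i, (walkStep (v i) : ℝ)) 0 := by
  have hper : Periodic (fun j : ℕ => walkStep (v j)) m := fun j => by
    simp only [Nat.cast_add, Fin.natCast_self, add_zero]
  rw [card_filter_staysPositive_shift (e := fun j => walkStep (v j)) hper
    fun i => by rcases walkStep_eq_one_or (v i) with h | h <;> omega,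
    ← Fin.sum_univ_eq_sum_range (fun j => walkStep (v j)) m]
  simp only [Fin.cast_val_eq_self]
  rw [← Int.cast_natCast, Int.toNat_eq_max]
  push_cast
  rfl

theorem card_mul_positiveWalkProb :
    m * positiveWalkProb p m =
      ∑ v : Fin m → Bool, (∏ i, coinWeight p (v i)) * max (∑ i, (walkStep (v i) : ℝ)) 0 :=
  calc (m : ℝ) * positiveWalkProb p m = ∑ r ∈ range m, positiveWalkProb p m := by simp
    _ = ∑ v : Fin m → Bool, ∑ r ∈ range m,
          if StaysPositive (fun j => walkStep (v ↑(r + j))) m then ∏ i, coinWeight p (v i)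
          else 0 := by
        rw [sum_congr rfl fun r _ => positiveWalkProb_eq_sum_rotate p r, sum_comm]
    _ = _ := by
        refine sum_congr rfl fun v _ => ?_
        rw [← card_filter_staysPositive_rotate, natCast_card_filter, mul_sum]
        simp only [mul_ite, mul_one, mul_zero]

variable {p}

theorem positiveWalkProb_bounds (hp0 : 0 ≤ p) (hp1 : p ≤ 1) :
    max (1 - 2 * p) 0 ≤ positiveWalkProb p m ∧
      positiveWalkProb p m ≤ max (1 - 2 * p) 0 + √(4 * p * (1 - p)) / √m := by
  set c := 1 - 2 * p
  set W : (Fin m → Bool) → ℝ := fun v => ∏ i, coinWeight p (v i)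
  set Y : (Fin m → Bool) → ℝ := fun v => ∑ i, ((walkStep (v i) : ℝ) - c)
  have hW₀ : ∀ v ∈ univ, 0 ≤ W v := fun v _ =>
    prod_nonneg fun i _ => coinWeight_nonneg hp0 hp1 _
  have hW₁ : ∑ v, W v = 1 := sum_prod_weight sum_coinWeight m
  have hY : ∑ v, W v * Y v = 0 :=
    sum_prod_weight_mul_sum sum_coinWeight sum_coinWeight_mul_walkStep_sub m
  have hY₂ : ∑ v, W v * Y v ^ 2 = m * (4 * p * (1 - p)) := by
    rw [← sum_coinWeight_mul_walkStep_sub_sq]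
    exact sum_prod_weight_mul_sum_sq sum_coinWeight sum_coinWeight_mul_walkStep_sub m
  have hm : (0 : ℝ) < m := Nat.cast_pos.2 (NeZero.pos m)
  have hid : m * positiveWalkProb p m = ∑ v, W v * max (Y v + m * c) 0 := by
    rw [card_mul_positiveWalkProb]
    refine sum_congr rfl fun v _ => ?_
    simp only [Y, W, sum_sub_distrib, sum_const, card_univ, Fintype.card_fin, nsmul_eq_mul,
      sub_add_cancel]
  have hmax : max (m * c) 0 = m * max c 0 := by rw [mul_max_of_nonneg _ _ hm.le, mul_zero]
  have hlower := max_le_sum_mul_max_add hW₀ hW₁ hY (m * c)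
  have hupper := sum_mul_max_add_le (Y := Y) hW₀ hW₁ (m * c)
  rw [← hid, hmax] at hlower hupper
  rw [hY₂, Real.sqrt_mul hm.le] at hupper
  refine ⟨le_of_mul_le_mul_left hlower hm, ?_⟩
  have hsm : 0 < √(m : ℝ) := Real.sqrt_pos.2 hm
  have hscaled : √m * (positiveWalkProb p m - max c 0) ≤ √(4 * p * (1 - p)) := by
    refine le_of_mul_le_mul_left ?_ hsm
    rw [← mul_assoc, Real.mul_self_sqrt hm.le]
    linarith
  rw [← sub_le_iff_le_add', le_div_iff₀ hsm]
  linarith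

end PositiveWalk

theorem tendsto_positiveWalkProb {p : ℝ} (hp0 : 0 ≤ p) (hp1 : p ≤ 1) :
    Tendsto (fun k : ℕ => positiveWalkProb p (k + 1)) atTop (𝓝 (max (1 - 2 * p) 0)) := by
  have hdecay : Tendsto (fun k : ℕ => √(4 * p * (1 - p)) / √((k + 1 : ℕ) : ℝ)) atTop (𝓝 0) :=
    tendsto_const_nhds.div_atTop <| Real.tendsto_sqrt_atTop.comp <|
      tendsto_natCast_atTop_atTop.comp (tendsto_add_atTop_nat 1)
  have hupper := (tendsto_const_nhds (x := max (1 - 2 * p) 0)).add hdecay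
  rw [add_zero] at hupper
  exact tendsto_of_tendsto_of_tendsto_of_le_of_le tendsto_const_nhds hupper
    (fun k => (positiveWalkProb_bounds hp0 hp1).1) (fun k => (positiveWalkProb_bounds hp0 hp1).2)

def window (a : ℤ) (m : ℕ) (x : ℤ → Bool) : Fin m → Bool := fun i => x (a + i)

theorem measurable_window (a : ℤ) (m : ℕ) : Measurable (window a m) :=
  measurable_pi_lambda _ fun _ => measurable_pi_apply _

section Bernoulli

variable {p : ℝ} (hp0 : 0 ≤ p) (hp1 : p ≤ 1) {μ : Measure (ℤ → Bool)} (hber : IsBernoulli p μ)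
include hp0 hp1 hber

theorem measure_window_preimage_singleton (a : ℤ) {m : ℕ} (v : Fin m → Bool) :
    μ (window a m ⁻¹' {v}) = ENNReal.ofReal (∏ i, coinWeight p (v i)) := by
  set site : Fin m ↪ ℤ := ⟨fun i => a + i, fun i j h => Fin.ext (by simpa using h)⟩
  set f : ℤ → Bool := extend site v fun _ => false
  have hf (i : Fin m) : f (site i) = v i := site.injective.extend_apply v _ i
  have hset : window a m ⁻¹' {v} = {x | ∀ t ∈ univ.map site, x t = f t} := by
    ext x
    simp only [Set.mem_preimage, Set.mem_singleton_iff, funext_iff, window, Set.mem_ofPred_eq,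
      forall_mem_map, mem_univ, forall_const, hf]
    rfl
  rw [hset, hber, prod_map, ENNReal.ofReal_prod_of_nonneg fun i _ => coinWeight_nonneg hp0 hp1 _]
  refine prod_congr rfl fun i _ => ?_
  rw [hf]
  cases v i <;> rfl

theorem measure_window_preimage (a : ℤ) {m : ℕ} (A : Finset (Fin m → Bool)) :
    μ (window a m ⁻¹' A) = ENNReal.ofReal (∑ v ∈ A, ∏ i, coinWeight p (v i)) := by
  rw [← sum_measure_preimage_singleton A
      fun v _ => measurable_window a m (measurableSet_singleton v),
    ENNReal.ofReal_sum_of_nonneg fun v _ => prod_nonneg fun i _ => coinWeight_nonneg hp0 hp1 _]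
  exact sum_congr rfl fun v _ => measure_window_preimage_singleton hp0 hp1 hber a v

end Bernoulli

theorem preimage_iterate_cylinder_false_false (n : ℕ) :
    (eca rule184)^[n] ⁻¹' cylinder [false, false] =
      window (-n) (2 * n + 2) ⁻¹'
        ↑({v | StaysPositive (fun j => walkStep (v j)) (2 * n + 2)} :
          Finset (Fin (2 * n + 2) → Bool)) := by
  ext x
  simp only [Set.mem_preimage, iterate_mem_cylinder_false_false_iff, mem_coe, mem_filter,
    mem_univ, true_and]
  refine staysPositive_congr fun j hj => ?_
  simp [window, Nat.mod_eq_of_lt hj]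

end Rule184

open Rule184

theorem rule184_prob_00_limit_general
    (p : ℝ) (hp0 : 0 ≤ p) (hp1 : p ≤ 1)
    (μ : Measure (ℤ → Bool)) (hber : IsBernoulli p μ) :
    (p < 1 / 2 →
      Tendsto (fun n : ℕ => (μ ((eca rule184)^[n] ⁻¹' cylinder [false, false])).toReal)
        atTop (nhds (1 - 2 * p))) ∧
    (1 / 2 ≤ p →
      Tendsto (fun n : ℕ => (μ ((eca rule184)^[n] ⁻¹' cylinder [false, false])).toReal)
        atTop (nhds 0)) := by
  have hP (n : ℕ) : (μ ((eca rule184)^[n] ⁻¹' cylinder [false, false])).toReal =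
      positiveWalkProb p (2 * n + 2) := by
    rw [preimage_iterate_cylinder_false_false, measure_window_preimage hp0 hp1 hber,
      ENNReal.toReal_ofReal
        (sum_nonneg fun v _ => prod_nonneg fun i _ => coinWeight_nonneg hp0 hp1 _)]
    rfl
  have hlim : Tendsto (fun n : ℕ => positiveWalkProb p (2 * n + 2)) atTop
      (𝓝 (max (1 - 2 * p) 0)) :=
    (tendsto_positiveWalkProb hp0 hp1).comp
      (tendsto_atTop_mono (fun n => by dsimp; omega) tendsto_id)
  simp only [hP]
  exact ⟨fun hp => max_eq_left (by linarith : (0 : ℝ) ≤ 1 - 2 * p) ▸ hlim,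
    fun hp => max_eq_right (by linarith : 1 - 2 * p ≤ (0 : ℝ)) ▸ hlim⟩

/-- for ECA rule 184 started from the Bernoulli measure `μ_p`,
`lim_{n→∞} P_n(00) = 1 − 2p` if `p < 1/2`, and `lim_{n→∞} P_n(00) = 0` if `p ≥ 1/2`. -/
theorem rule184_prob_00_limit
    (p : ℝ) (hp0 : 0 ≤ p) (hp1 : p ≤ 1)
    (μ : Measure (ℤ → Bool)) (hprob : IsProbabilityMeasure μ) (hber : IsBernoulli p μ) :
    (p < 1 / 2 →
      Tendsto (fun n : ℕ => (μ ((eca rule184)^[n] ⁻¹' cylinder [false, false])).toReal)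
        atTop (nhds (1 - 2 * p))) ∧
    (1 / 2 ≤ p →
      Tendsto (fun n : ℕ => (μ ((eca rule184)^[n] ⁻¹' cylinder [false, false])).toReal)
        atTop (nhds 0)) :=
  rule184_prob_00_limit_general p hp0 hp1 μ hber
end

section
/- Let F be the global map of ECA rule 184 and take the symmetric Bernoulli initial measure μ_{1/2}. Then for every n ≥ 0: P_n(0) = 1/2; P_n(00) = 2^{−2−2n}·C(2n+1, n+1); P_n(000) = 2^{−2n−3}·C(2n+1, n+1); and P_n(010) = 1/2 − 3·2^{−3−2n}·C(2n+1, n+1), where C(·,·) denotes the binomial coefficient. -/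
open MeasureTheory

/-!
Read a configuration through its height walk, which steps up on a `0` and down on a `1`. Since
rule 184 moves every `1` that has a `0` to its right one cell to the right, one step of the
automaton turns the walk `W` into `t ↦ min (W t) (W (t + 2))` up to a shift. Hence, for the walk
of the initial configuration started at cell `-n`, cell `t` is `0` after `n` steps exactly when the
minimum of the walk over the times `t + 1, t + 3, …, t + 2n + 1` exceeds its minimum over
`t, t + 2, …, t + 2n` by one. So `k + 2` zeros in cells `0, …, k + 1` mean that the walk climbs
`k + 1` steps and then never drops below that height up to time `2n + k + 2`; peeling off the
climb leaves a walk of length `2n + 1` that stays nonnegative, and there are `C(2n+1, n)` of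
those.

The other probabilities follow from `P(b) = P(b0) + P(b1)` and from the invariance of rule 184
under reflection combined with exchanging `0` and `1`, which gives `P(0) = P(1)` and
`P(011) = P(001)`.
-/

open Finset

def walkStep (b : Bool) : ℤ := if b then -1 else 1

def walk (s : ℕ → Bool) (t : ℕ) : ℤ := ∑ j ∈ range t, walkStep (s j)

@[simp] lemma walk_zero (s : ℕ → Bool) : walk s 0 = 0 := by simp [walk]

lemma walk_succ (s : ℕ → Bool) (t : ℕ) : walk s (t + 1) = walk s t + walkStep (s t) :=
  sum_range_succ _ _

lemma walkStep_eq_one_or (b : Bool) : walkStep b = 1 ∨ walkStep b = -1 := by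
  cases b <;> simp [walkStep]

lemma walkStep_eq_one_iff {b : Bool} : walkStep b = 1 ↔ b = false := by
  cases b <;> simp [walkStep]

lemma walk_le (s : ℕ → Bool) (t : ℕ) : walk s t ≤ t := by
  induction t with
  | zero => simp
  | succ t ih =>
    rcases walkStep_eq_one_or (s t) with h | h <;> rw [walk_succ, h] <;> push_cast <;> omega

lemma two_dvd_walk_add (s : ℕ → Bool) (t : ℕ) : 2 ∣ walk s t + t := by
  induction t with
  | zero => simp
  | succ t ih =>
    rcases walkStep_eq_one_or (s t) with h | h <;> rw [walk_succ, h] <;> push_cast <;> omega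

def strideMin (n : ℕ) (f : ℕ → ℤ) (c : ℕ) : ℤ :=
  (range (n + 1)).inf' nonempty_range_add_one fun j => f (c + 2 * j)

section strideMin

variable {n : ℕ} {f : ℕ → ℤ} {c : ℕ}

lemma strideMin_le {j : ℕ} (hj : j ≤ n) : strideMin n f c ≤ f (c + 2 * j) :=
  inf'_le _ (mem_range.2 (by omega))

lemma exists_strideMin_eq : ∃ j ≤ n, strideMin n f c = f (c + 2 * j) := by
  obtain ⟨j, hj, h⟩ := exists_mem_eq_inf' nonempty_range_add_one fun j => f (c + 2 * j)
  exact ⟨j, by simpa [Nat.lt_succ_iff] using hj, h⟩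

lemma le_strideMin {A : ℤ} (h : ∀ j ≤ n, A ≤ f (c + 2 * j)) : A ≤ strideMin n f c :=
  le_inf' _ _ fun j hj => h j (by simpa [Nat.lt_succ_iff] using hj)

lemma strideMin_sub_const (K : ℤ) : strideMin n (fun t => f t - K) c = strideMin n f c - K := by
  obtain ⟨j, hj, hf⟩ := exists_strideMin_eq (n := n) (f := f) (c := c)
  refine le_antisymm ?_ (le_strideMin fun i hi => by linarith [strideMin_le (f := f) (c := c) hi])
  rw [hf]; exact strideMin_le hj

lemma strideMin_min_add_two :
    strideMin n (fun t => min (f t) (f (t + 2))) c = strideMin (n + 1) f c := by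
  refine le_antisymm ?_ (le_strideMin fun j hj => le_min (strideMin_le (by omega)) ?_)
  · obtain ⟨j, hj, hf⟩ := exists_strideMin_eq (n := n + 1) (f := f) (c := c)
    rw [hf]
    rcases Nat.lt_or_ge j (n + 1) with hjn | hjn
    · exact (strideMin_le (by omega : j ≤ n)).trans (min_le_left _ _)
    · have := strideMin_le (n := n) (f := fun t => min (f t) (f (t + 2))) (c := c) le_rfl
      rw [show c + 2 * j = c + 2 * n + 2 by omega]
      exact this.trans (min_le_right _ _)
  · simpa [mul_add, add_assoc] using
      strideMin_le (n := n + 1) (f := f) (c := c) (j := j + 1) (by omega)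

end strideMin

lemma walkStep_rule184 (p q r : Bool) (W : ℤ) :
    walkStep (rule184 p q r) =
      min (W + walkStep p) (W + walkStep p + walkStep q + walkStep r)
        - min W (W + walkStep p + walkStep q) := by
  cases p <;> cases q <;> cases r <;>
    simp only [rule184, walkStep, Bool.false_eq_true, if_true, if_false] <;> omega

lemma walk_eca_rule184 (x : ℤ → Bool) (a : ℤ) (t : ℕ) :
    walk (fun j => eca rule184 x (a + 1 + j)) t =
      min (walk (fun j => x (a + j)) t) (walk (fun j => x (a + j)) (t + 2))
        - min (walk (fun j => x (a + j)) 0) (walk (fun j => x (a + j)) 2) := by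
  induction t with
  | zero => simp
  | succ t ih =>
    rw [walk_succ, ih, show t + 1 + 2 = t + 2 + 1 by omega]
    simp only [walk_succ]
    have h := walkStep_rule184 (x (a + t)) (x (a + (t + 1 : ℕ))) (x (a + (t + 2 : ℕ)))
      (walk (fun j => x (a + j)) t)
    have e : eca rule184 x (a + 1 + t) =
        rule184 (x (a + t)) (x (a + (t + 1 : ℕ))) (x (a + (t + 2 : ℕ))) := by
      simp only [eca]; push_cast; ring_nf
    rw [e, h]; ring

theorem walkStep_iterate_eca_rule184 (n : ℕ) (x : ℤ → Bool) (a : ℤ) (t : ℕ) :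
    walkStep ((eca rule184)^[n] x (a + n + t)) =
      strideMin n (walk fun j => x (a + j)) (t + 1) - strideMin n (walk fun j => x (a + j)) t := by
  induction n generalizing x a with
  | zero => simp [strideMin, walk_succ]
  | succ n ih =>
    rw [Function.iterate_succ_apply, show a + (n + 1 : ℕ) + t = a + 1 + n + t by push_cast; ring,
      ih, funext (walk_eca_rule184 x a), strideMin_sub_const, strideMin_sub_const,
      strideMin_min_add_two, strideMin_min_add_two]
    ring

def ClimbsAndStays (k L : ℕ) (s : ℕ → Bool) : Prop :=
  (∀ t ≤ k, walk s t = t) ∧ ∀ t, k ≤ t → t ≤ L → (k : ℤ) ≤ walk s t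

section run

variable {n k : ℕ} {s : ℕ → Bool}

lemma strideMin_walk_eq_of_forall_sub_eq_one
    (h : ∀ i ≤ k + 1, strideMin n (walk s) (i + 1) - strideMin n (walk s) i = 1) :
    ∀ i ≤ k + 2, strideMin n (walk s) i = i := by
  have h0 : strideMin n (walk s) 0 = 0 := by
    obtain ⟨j, hj, hmin⟩ := exists_strideMin_eq (n := n) (f := walk s) (c := 0)
    rcases Nat.eq_zero_or_pos j with rfl | hj0
    · simpa using hmin
    · -- otherwise the minimum at `0` would be attained again in the window starting at `2`
      have h2 := strideMin_le (n := n) (f := walk s) (c := 2) (j := j - 1) (by omega)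
      rw [show 2 + 2 * (j - 1) = 0 + 2 * j by omega] at h2
      have h01 := h 0 (by omega)
      have h12 := h 1 (by omega)
      norm_num at h01 h12
      omega
  intro i hi
  induction i with
  | zero => simpa using h0
  | succ i ih => have := h i (by omega); push_cast; linarith [ih (by omega)]

lemma strideMin_walk_eq_iff_climbsAndStays :
    (∀ i ≤ k + 2, strideMin n (walk s) i = i) ↔ ClimbsAndStays (k + 1) (2 * n + k + 2) s := by
  constructor
  · intro h
    refine ⟨fun t ht => le_antisymm (walk_le s t) ?_, fun t ht₁ ht₂ => ?_⟩
    · simpa [h t (by omega)] using strideMin_le (n := n) (f := walk s) (c := t) (j := 0) (by omega)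
    · obtain ⟨j, hj | hj⟩ := Nat.even_or_odd' (t - (k + 1))
      · have := strideMin_le (n := n) (f := walk s) (c := k + 1) (j := j) (by omega)
        rw [h (k + 1) (by omega), show k + 1 + 2 * j = t by omega] at this
        exact_mod_cast this
      · have := strideMin_le (n := n) (f := walk s) (c := k + 2) (j := j) (by omega)
        rw [h (k + 2) (by omega), show k + 2 + 2 * j = t by omega] at this
        push_cast at this ⊢; linarith
  · rintro ⟨hclimb, hstay⟩ i hi
    refine le_antisymm ?_ (le_strideMin fun j hj => ?_)
    · have := strideMin_le (n := n) (f := walk s) (c := i) (j := 0) (by omega)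
      simpa using this.trans (walk_le s i)
    · rcases le_or_gt (i + 2 * j) (k + 1) with hle | hlt
      · rw [hclimb _ hle]; push_cast; omega
      · have hw := hstay (i + 2 * j) (by omega) (by omega)
        have hpar := two_dvd_walk_add s (i + 2 * j)
        push_cast at hw hpar ⊢
        omega

theorem forall_strideMin_sub_eq_one_iff :
    (∀ i ≤ k + 1, strideMin n (walk s) (i + 1) - strideMin n (walk s) i = 1) ↔
      ClimbsAndStays (k + 1) (2 * n + k + 2) s := by
  rw [← strideMin_walk_eq_iff_climbsAndStays]
  refine ⟨strideMin_walk_eq_of_forall_sub_eq_one, fun h i hi => ?_⟩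
  rw [h i (by omega), h (i + 1) (by omega)]; push_cast; ring

end run

lemma climbsAndStays_succ_iff {k L : ℕ} {s : ℕ → Bool} :
    ClimbsAndStays (k + 1) (L + 1) s ↔ s 0 = false ∧ ClimbsAndStays k L fun j => s (j + 1) := by
  have hwalk : ∀ t, walk s (t + 1) = walkStep (s 0) + walk (fun j => s (j + 1)) t :=
    fun t => sum_range_succ' _ _ |>.trans (add_comm _ _)
  simp only [ClimbsAndStays, ← walkStep_eq_one_iff]
  constructor
  · rintro ⟨hclimb, hstay⟩
    have h0 : walkStep (s 0) = 1 := by simpa [walk_succ] using hclimb 1 (by omega)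
    refine ⟨h0, ⟨fun t ht => ?_, fun t ht₁ ht₂ => ?_⟩⟩
    · have := hclimb (t + 1) (by omega)
      rw [hwalk, h0] at this; push_cast at this; linarith
    · have := hstay (t + 1) (by omega) (by omega)
      rw [hwalk, h0] at this; push_cast at this; linarith
  · rintro ⟨h0, hclimb, hstay⟩
    refine ⟨fun t ht => ?_, fun t ht₁ ht₂ => ?_⟩ <;> obtain _ | t := t
    · simp
    · rw [hwalk, h0, hclimb t (by omega)]; push_cast; ring
    · omega
    · rw [hwalk, h0]; have := hstay t (by omega) (by omega); push_cast; linarith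

def seqOf {m : ℕ} (v : Fin m → Bool) (j : ℕ) : Bool := if h : j < m then v ⟨j, h⟩ else false

section seqOf

variable {m : ℕ}

@[simp] lemma seqOf_apply (v : Fin m → Bool) (j : Fin m) : seqOf v j = v j := by simp [seqOf]

@[simp] lemma seqOf_cons_zero (b : Bool) (w : Fin m → Bool) :
    seqOf (Fin.cons b w : Fin (m + 1) → Bool) 0 = b := by simp [seqOf]

lemma seqOf_cons_succ (b : Bool) (w : Fin m → Bool) :
    (fun j => seqOf (Fin.cons b w : Fin (m + 1) → Bool) (j + 1)) = seqOf w := by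
  funext j
  by_cases h : j < m
  · simpa [seqOf, h] using Fin.cons_succ (α := fun _ => Bool) b w ⟨j, h⟩
  · simp [seqOf, h]

lemma walk_seqOf_snoc_of_le (w : Fin m → Bool) (b : Bool) {t : ℕ} (ht : t ≤ m) :
    walk (seqOf (Fin.snoc w b : Fin (m + 1) → Bool)) t = walk (seqOf w) t :=
  sum_congr rfl fun j hj => by
    have hj : j < m := by simp at hj; omega
    simp [seqOf, hj, show j < m + 1 by omega, Fin.snoc]

lemma walk_seqOf_snoc (w : Fin m → Bool) (b : Bool) :
    walk (seqOf (Fin.snoc w b : Fin (m + 1) → Bool)) (m + 1) = walk (seqOf w) m + walkStep b := by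
  rw [walk_succ, walk_seqOf_snoc_of_le w b le_rfl]; simp [seqOf, Fin.snoc]

lemma walk_seqOf_not (v : Fin m → Bool) :
    walk (seqOf fun i => !v i) m = -walk (seqOf v) m := by
  rw [walk, walk, ← sum_neg_distrib]
  refine sum_congr rfl fun j hj => ?_
  have hj : j < m := by simpa using hj
  cases h : v ⟨j, hj⟩ <;> simp [seqOf, hj, h, walkStep]

lemma walk_seqOf_eq_sub_card (v : Fin m → Bool) :
    walk (seqOf v) m = m - 2 * #{i | v i} := by
  have h : ∀ i, walkStep (v i) = 1 - 2 * if v i then 1 else 0 := fun i => by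
    cases v i <;> simp [walkStep]
  rw [walk, ← Fin.sum_univ_eq_sum_range (fun j => walkStep (seqOf v j))]
  simp only [seqOf_apply, h, sum_sub_distrib, ← mul_sum, sum_boole]
  simp

end seqOf

lemma card_subtype_fin_succ_cons {m : ℕ} (P : (Fin (m + 1) → Bool) → Prop) :
    Nat.card {v // P v} =
      Nat.card {w : Fin m → Bool // P (Fin.cons false w)} +
        Nat.card {w : Fin m → Bool // P (Fin.cons true w)} := by
  rw [← Nat.card_congr ((Fin.consEquiv fun _ => Bool).subtypeEquiv
      (p := fun q => P (Fin.cons q.1 q.2)) fun _ => Iff.rfl),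
    Nat.card_congr (Equiv.subtypeProdEquivSigmaSubtype fun b w => P (Fin.cons b w)),
    Nat.card_sigma, Fintype.sum_bool, add_comm]

lemma card_subtype_fin_succ_snoc {m : ℕ} (P : (Fin (m + 1) → Bool) → Prop) :
    Nat.card {v // P v} =
      Nat.card {w : Fin m → Bool // P (Fin.snoc w false)} +
        Nat.card {w : Fin m → Bool // P (Fin.snoc w true)} := by
  rw [← Nat.card_congr ((Fin.snocEquiv fun _ => Bool).subtypeEquiv
      (p := fun q => P (Fin.snoc q.2 q.1)) fun _ => Iff.rfl),
    Nat.card_congr (Equiv.subtypeProdEquivSigmaSubtype fun b w => P (Fin.snoc w b)),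
    Nat.card_sigma, Fintype.sum_bool, add_comm]

section ballot

variable {L : ℕ}

lemma nonneg_walk_snoc_iff (w : Fin L → Bool) (b : Bool) :
    (∀ t ≤ L + 1, 0 ≤ walk (seqOf (Fin.snoc w b : Fin (L + 1) → Bool)) t) ↔
      (∀ t ≤ L, 0 ≤ walk (seqOf w) t) ∧ 0 ≤ walk (seqOf w) L + walkStep b := by
  constructor
  · intro h
    exact ⟨fun t ht => walk_seqOf_snoc_of_le w b ht ▸ h t (by omega),
      walk_seqOf_snoc w b ▸ h (L + 1) le_rfl⟩
  · rintro ⟨h, hL⟩ t ht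
    rcases Nat.lt_or_ge L t with hlt | hle
    · rwa [show t = L + 1 by omega, walk_seqOf_snoc]
    · exact walk_seqOf_snoc_of_le w b hle ▸ h t hle

lemma card_walk_eq_neg_one_or_eq_zero :
    Nat.card {v : Fin L → Bool // walk (seqOf v) L = -1 ∨ walk (seqOf v) L = 0} =
      Nat.card {v : Fin L → Bool // walk (seqOf v) L = 0 ∨ walk (seqOf v) L = 1} :=
  Nat.card_congr <| (Equiv.piCongrRight fun _ => Equiv.boolNot).subtypeEquiv fun v => by
    change _ ↔ walk (seqOf fun i => !v i) L = 0 ∨ walk (seqOf fun i => !v i) L = 1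
    rw [walk_seqOf_not]; omega

theorem card_nonneg_walk_ge (L h : ℕ) :
    Nat.card {v : Fin L → Bool // (∀ t ≤ L, 0 ≤ walk (seqOf v) t) ∧ h ≤ walk (seqOf v) L} =
      Nat.card {v : Fin L → Bool // walk (seqOf v) L = h ∨ walk (seqOf v) L = h + 1} := by
  induction L generalizing h with
  | zero => exact Nat.card_congr (Equiv.subtypeEquivRight fun v => by simp; omega)
  | succ L ih =>
    rw [card_subtype_fin_succ_snoc, card_subtype_fin_succ_snoc]
    simp only [nonneg_walk_snoc_iff, walk_seqOf_snoc, walkStep, Bool.false_eq_true, if_false,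
      if_true]
    congr 1
    · calc _ = Nat.card {w : Fin L → Bool //
              (∀ t ≤ L, 0 ≤ walk (seqOf w) t) ∧ ((h - 1 : ℕ) : ℤ) ≤ walk (seqOf w) L} :=
            Nat.card_congr <| Equiv.subtypeEquivRight fun w =>
              ⟨fun ⟨⟨hw, _⟩, hh⟩ => ⟨hw, by have := hw L le_rfl; omega⟩,
                fun ⟨hw, hh⟩ => ⟨⟨hw, by linarith [hw L le_rfl]⟩, by omega⟩⟩
        _ = _ := ih (h - 1)
        _ = _ := by
          rcases h with _ | h
          · -- `0 - 1` truncates to `0`; exchanging `0 ↔ 1` swaps the end heights `-1, 0` and `0, 1`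
            refine (Nat.card_congr (Equiv.subtypeEquivRight fun w => ?_)).trans
                (card_walk_eq_neg_one_or_eq_zero.symm.trans
                  (Nat.card_congr (Equiv.subtypeEquivRight fun w => ?_))) <;> omega
          · exact Nat.card_congr (Equiv.subtypeEquivRight fun w => by omega)
    · calc _ = Nat.card {w : Fin L → Bool //
              (∀ t ≤ L, 0 ≤ walk (seqOf w) t) ∧ ((h + 1 : ℕ) : ℤ) ≤ walk (seqOf w) L} :=
            Nat.card_congr <| Equiv.subtypeEquivRight fun w =>
              ⟨fun ⟨⟨hw, _⟩, hh⟩ => ⟨hw, by omega⟩, fun ⟨hw, hh⟩ => ⟨⟨hw, by omega⟩, by omega⟩⟩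
        _ = _ := ih (h + 1)
        _ = _ := Nat.card_congr (Equiv.subtypeEquivRight fun w => by omega)

theorem card_nonneg_walk (L : ℕ) :
    Nat.card {v : Fin L → Bool // ∀ t ≤ L, 0 ≤ walk (seqOf v) t} = L.choose (L / 2) := by
  let toFinset : (Fin L → Bool) ≃ Finset (Fin L) :=
    { toFun v := {i | v i}
      invFun s i := decide (i ∈ s)
      left_inv v := by ext; simp
      right_inv s := by ext; simp }
  calc _ = Nat.card {v : Fin L → Bool //
          (∀ t ≤ L, 0 ≤ walk (seqOf v) t) ∧ ((0 : ℕ) : ℤ) ≤ walk (seqOf v) L} :=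
        Nat.card_congr <| Equiv.subtypeEquivRight fun v =>
          ⟨fun h => ⟨h, by simpa using h L le_rfl⟩, And.left⟩
    _ = Nat.card {v : Fin L → Bool // #{i | v i} = L / 2} := by
        rw [card_nonneg_walk_ge]
        refine Nat.card_congr (Equiv.subtypeEquivRight fun v => ?_)
        have := (card_le_univ {i | v i}).trans_eq (Fintype.card_fin L)
        rw [walk_seqOf_eq_sub_card]
        omega
    _ = Nat.card {s : Finset (Fin L) // #s = L / 2} :=
        Nat.card_congr (toFinset.subtypeEquiv fun _ => Iff.rfl)
    _ = _ := by rw [Nat.card_eq_fintype_card, Fintype.card_finset_len, Fintype.card_fin]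

end ballot

theorem card_climbsAndStays (L k : ℕ) :
    Nat.card {v : Fin (L + k) → Bool // ClimbsAndStays k (L + k) (seqOf v)} = L.choose (L / 2) := by
  induction k with
  | zero =>
    rw [← card_nonneg_walk]
    exact Nat.card_congr (Equiv.subtypeEquivRight fun v => by simp [ClimbsAndStays])
  | succ k ih =>
    rw [← ih, show L + (k + 1) = L + k + 1 from rfl, card_subtype_fin_succ_cons]
    simp [climbsAndStays_succ_iff, seqOf_cons_succ]

def window (a : ℤ) (m : ℕ) (x : ℤ → Bool) : Fin m → Bool := fun j => x (a + j)

-- Left of the window `Int.toNat` clamps to `0`; values outside the window never matter.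
def place {m : ℕ} (a : ℤ) (v : Fin m → Bool) : ℤ → Bool := fun i => seqOf v (i - a).toNat

section window

variable {m : ℕ}

@[simp] lemma place_add_natCast (a : ℤ) (v : Fin m → Bool) (j : ℕ) :
    place a v (a + j) = seqOf v j := by
  simp [place]

lemma place_window_apply {a i : ℤ} (x : ℤ → Bool) (h₁ : a ≤ i) (h₂ : i < a + m) :
    place a (window a m x) i = x i := by
  obtain ⟨j, rfl⟩ : ∃ j : ℕ, i = a + j := ⟨(i - a).toNat, by omega⟩
  simp [seqOf, window, show j < m by omega]

lemma measurable_window (a : ℤ) : Measurable (window a m) :=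
  measurable_pi_lambda _ fun _ => measurable_pi_apply _

theorem IsBernoulli.measure_window_mem {μ : Measure (ℤ → Bool)} (hμ : IsBernoulli (1 / 2) μ)
    (a : ℤ) (P : (Fin m → Bool) → Prop) :
    μ {x | P (window a m x)} = Nat.card {v // P v} * 2⁻¹ ^ m := by
  classical
  have hcell : ∀ v, μ (window a m ⁻¹' {v}) = 2⁻¹ ^ m := fun v => by
    have hs : window a m ⁻¹' {v} = {x | ∀ i ∈ Ico a (a + m), x i = place a v i} := by
      ext x
      simp only [Set.mem_preimage, Set.mem_singleton_iff, funext_iff, window, mem_Ico,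
        Set.mem_ofPred_eq]
      refine ⟨fun h i hi => ?_, fun h j => by simpa using h (a + j) (by omega)⟩
      obtain ⟨j, rfl⟩ : ∃ j : ℕ, i = a + j := ⟨(i - a).toNat, by omega⟩
      simpa [seqOf, show j < m by omega] using h ⟨j, by omega⟩
    rw [hs, hμ, show (1 : ℝ) - 1 / 2 = 1 / 2 by norm_num]
    simp only [ite_self, prod_const, Int.card_Ico, add_sub_cancel_left, Int.toNat_natCast]
    rw [one_div, ENNReal.ofReal_inv_of_pos two_pos, ENNReal.ofReal_ofNat]
  have hP : {x | P (window a m x)} = window a m ⁻¹' ↑({v | P v} : Finset _) := by ext; simp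
  rw [hP, ← sum_measure_preimage_singleton _
      fun v _ => measurable_window a (measurableSet_singleton v),
    sum_congr rfl fun v _ => hcell v, sum_const, nsmul_eq_mul, Nat.card_eq_fintype_card,
    Fintype.card_subtype]

end window

lemma eca_iterate_congr (f : Bool → Bool → Bool → Bool) {x y : ℤ → Bool} {N : ℕ} {k : ℤ}
    (h : ∀ i, k - N ≤ i → i ≤ k + N → x i = y i) : (eca f)^[N] x k = (eca f)^[N] y k := by
  induction N generalizing x y with
  | zero => exact h k (by simp) (by simp)
  | succ N ih =>
    simp only [Function.iterate_succ_apply]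
    refine ih fun i h₁ h₂ => ?_
    simp only [eca]
    push_cast at h₁ h₂ h
    rw [h (i - 1) (by omega) (by omega), h i (by omega) (by omega), h (i + 1) (by omega) (by omega)]

lemma mem_cylinder_iff_getElem {b : List Bool} {x : ℤ → Bool} :
    x ∈ cylinder b ↔ ∀ j (hj : j < b.length), x j = b[j] :=
  ⟨fun h j hj => h ⟨j, hj⟩, fun h j => h j j.isLt⟩

theorem IsBernoulli.measure_preimage_cylinder {μ : Measure (ℤ → Bool)} (hμ : IsBernoulli (1 / 2) μ)
    (f : Bool → Bool → Bool → Bool) (n : ℕ) (b : List Bool) {m : ℕ} (hm : 2 * n + b.length ≤ m) :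
    μ ((eca f)^[n] ⁻¹' cylinder b) =
      Nat.card {v : Fin m → Bool // place (-n) v ∈ (eca f)^[n] ⁻¹' cylinder b} * 2⁻¹ ^ m := by
  rw [← hμ.measure_window_mem (-n)]
  congr 1
  ext x
  simp only [Set.mem_preimage, Set.mem_ofPred_eq, mem_cylinder_iff_getElem]
  refine forall₂_congr fun j hj => ?_
  rw [eca_iterate_congr f (y := place (-n) (window (-n) m x))
    fun i h₁ h₂ => (place_window_apply x (by omega) (by omega)).symm]

def reflect (c : ℤ) (x : ℤ → Bool) : ℤ → Bool := fun i => !x (c - i)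

lemma commute_eca_rule184_reflect (c : ℤ) : Function.Commute (eca rule184) (reflect c) := by
  intro x
  funext i
  simp only [eca, reflect, rule184, show c - (i - 1) = c - i + 1 by ring,
    show c - (i + 1) = c - i - 1 by ring]
  cases x (c - i) <;> rfl

def revNot {m : ℕ} (v : Fin m → Bool) : Fin m → Bool := fun j => !v j.rev

lemma revNot_involutive {m : ℕ} : Function.Involutive (revNot (m := m)) := fun v => by
  funext j; simp [revNot]

lemma iterate_eca_rule184_place_revNot {n m k j : ℕ} (v : Fin m → Bool)
    (h : k + j + 2 * n + 1 = m) :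
    (eca rule184)^[n] (place (-n) (revNot v)) k = !(eca rule184)^[n] (place (-n) v) j := by
  rw [eca_iterate_congr rule184 (y := reflect (k + j) (place (-n) v)),
    ((commute_eca_rule184_reflect _).iterate_left n).eq, reflect, show (k + j : ℤ) - k = j by ring]
  intro i h₁ h₂
  obtain ⟨t, rfl⟩ : ∃ t : ℕ, i = -n + t := ⟨(i + n).toNat, by omega⟩
  rw [reflect, show (k + j : ℤ) - (-n + t) = -n + (m - 1 - t : ℕ) by omega, place_add_natCast,
    place_add_natCast]
  simp only [seqOf, revNot, show t < m by omega, show m - 1 - t < m by omega, dif_pos, Fin.rev]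
  congr 3
  omega

theorem IsBernoulli.measure_preimage_cylinder_reverse_map_not {μ : Measure (ℤ → Bool)}
    (hμ : IsBernoulli (1 / 2) μ) (n : ℕ) (b : List Bool) :
    μ ((eca rule184)^[n] ⁻¹' cylinder (b.reverse.map not)) =
      μ ((eca rule184)^[n] ⁻¹' cylinder b) := by
  rw [hμ.measure_preimage_cylinder rule184 n _ (m := 2 * n + b.length) (by simp),
    hμ.measure_preimage_cylinder rule184 n b le_rfl]
  congr 2
  refine Nat.card_congr ((revNot_involutive.toPerm revNot).subtypeEquiv fun v => ?_)
  simp only [Set.mem_preimage, mem_cylinder_iff_getElem, List.length_map, List.length_reverse,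
    List.getElem_map, List.getElem_reverse, Function.Involutive.coe_toPerm]
  constructor
  · intro h k hk
    rw [iterate_eca_rule184_place_revNot (n := n) (k := k) (j := b.length - 1 - k) v (by omega),
      h _ (by omega), Bool.not_not]
    congr 1; omega
  · intro h k hk
    have := h (b.length - 1 - k) (by omega)
    rw [iterate_eca_rule184_place_revNot (n := n) (j := k) v (by omega)] at this
    rw [← this, Bool.not_not]

theorem IsBernoulli.measure_preimage_cylinder_replicate_false {μ : Measure (ℤ → Bool)}
    (hμ : IsBernoulli (1 / 2) μ) (n k : ℕ) :
    μ ((eca rule184)^[n] ⁻¹' cylinder (List.replicate (k + 2) false)) =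
      (2 * n + 1).choose n * 2⁻¹ ^ (2 * n + k + 2) := by
  rw [hμ.measure_preimage_cylinder rule184 n _ (m := 2 * n + 1 + (k + 1)) (by simp; omega)]
  have hcount : Nat.card {v : Fin (2 * n + 1 + (k + 1)) → Bool //
      place (-n) v ∈ (eca rule184)^[n] ⁻¹' cylinder (List.replicate (k + 2) false)} =
        (2 * n + 1).choose n := by
    calc _ = Nat.card {v : Fin (2 * n + 1 + (k + 1)) → Bool //
            ClimbsAndStays (k + 1) (2 * n + 1 + (k + 1)) (seqOf v)} :=
          Nat.card_congr <| Equiv.subtypeEquivRight fun v => by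
            have hstep := fun i : ℕ => walkStep_iterate_eca_rule184 n (place (-n) v) (-n) i
            simp only [neg_add_cancel, zero_add, place_add_natCast] at hstep
            refine Iff.trans ?_
              ((forall_strideMin_sub_eq_one_iff (n := n) (k := k) (s := seqOf v)).trans
                (by rw [show 2 * n + k + 2 = 2 * n + 1 + (k + 1) by ring]))
            simp [mem_cylinder_iff_getElem, ← hstep, walkStep_eq_one_iff, Nat.lt_succ_iff]
      _ = (2 * n + 1).choose ((2 * n + 1) / 2) := card_climbsAndStays _ _
      _ = _ := by congr 1; omega
  rw [hcount, show 2 * n + 1 + (k + 1) = 2 * n + k + 2 by ring]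

lemma measurable_eca (f : Bool → Bool → Bool → Bool) : Measurable (eca f) := by
  unfold eca; fun_prop

lemma cylinder_append_singleton (b : List Bool) (c : Bool) :
    cylinder (b ++ [c]) = cylinder b ∩ {x | x b.length = c} := by
  ext x
  simp only [mem_cylinder_iff_getElem, Set.mem_inter_iff, Set.mem_ofPred_eq, List.length_append,
    List.length_singleton]
  constructor
  · intro h
    exact ⟨fun j hj => by simpa [List.getElem_append_left hj] using h j (by omega),
      by simpa using h b.length (by omega)⟩
  · rintro ⟨h, hc⟩ j hj
    rcases lt_or_eq_of_le (Nat.lt_succ_iff.mp hj) with hj | rfl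
    · rw [List.getElem_append_left hj]; exact h j hj
    · simpa using hc

lemma measureReal_preimage_cylinder_eq_add {μ : Measure (ℤ → Bool)} [IsFiniteMeasure μ]
    (f : Bool → Bool → Bool → Bool) (n : ℕ) (b : List Bool) :
    μ.real ((eca f)^[n] ⁻¹' cylinder b) =
      μ.real ((eca f)^[n] ⁻¹' cylinder (b ++ [false])) +
        μ.real ((eca f)^[n] ⁻¹' cylinder (b ++ [true])) := by
  have hmeas : MeasurableSet ((eca f)^[n] ⁻¹' {x | x b.length = false}) :=
    (measurable_eca f).iterate n (measurableSet_eq_fun (measurable_pi_apply _) measurable_const)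
  rw [← measureReal_inter_add_sdiff hmeas, cylinder_append_singleton, cylinder_append_singleton,
    Set.preimage_inter, Set.preimage_inter, Set.sdiff_eq, ← Set.preimage_compl]
  congr 4
  ext x
  simp

theorem IsBernoulli.measureReal_preimage_cylinder_false {μ : Measure (ℤ → Bool)}
    [IsProbabilityMeasure μ] (hμ : IsBernoulli (1 / 2) μ) (n : ℕ) :
    μ.real ((eca rule184)^[n] ⁻¹' cylinder [false]) = 1 / 2 := by
  have hsplit := measureReal_preimage_cylinder_eq_add (μ := μ) rule184 n []
  have hsymm := congrArg ENNReal.toReal (hμ.measure_preimage_cylinder_reverse_map_not n [false])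
  rw [show cylinder [] = Set.univ from Set.eq_univ_of_forall fun x j => j.elim0,
    Set.preimage_univ, probReal_univ] at hsplit
  simp only [List.nil_append, ← measureReal_def] at hsplit hsymm
  simp only [List.reverse_singleton, List.map_singleton, Bool.not_false] at hsymm
  linarith

theorem IsBernoulli.measureReal_preimage_cylinder_false_true_false {μ : Measure (ℤ → Bool)}
    [IsFiniteMeasure μ] (hμ : IsBernoulli (1 / 2) μ) (n : ℕ) :
    μ.real ((eca rule184)^[n] ⁻¹' cylinder [false, true, false]) =
      μ.real ((eca rule184)^[n] ⁻¹' cylinder [false])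
        - 2 * μ.real ((eca rule184)^[n] ⁻¹' cylinder [false, false])
        + μ.real ((eca rule184)^[n] ⁻¹' cylinder [false, false, false]) := by
  have h0 := measureReal_preimage_cylinder_eq_add (μ := μ) rule184 n [false]
  have h01 := measureReal_preimage_cylinder_eq_add (μ := μ) rule184 n [false, true]
  have h00 := measureReal_preimage_cylinder_eq_add (μ := μ) rule184 n [false, false]
  have hsymm := congrArg ENNReal.toReal
    (hμ.measure_preimage_cylinder_reverse_map_not n [false, true, true])
  simp only [List.cons_append, List.nil_append, List.reverse_cons, List.reverse_nil,
    List.map_cons, List.map_nil, Bool.not_true, Bool.not_false, ← measureReal_def] at *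
  linarith

theorem IsBernoulli.measureReal_preimage_cylinder_replicate_false {μ : Measure (ℤ → Bool)}
    (hμ : IsBernoulli (1 / 2) μ) (n k : ℕ) :
    μ.real ((eca rule184)^[n] ⁻¹' cylinder (List.replicate (k + 2) false)) =
      (2 * n + 1).choose n * 2⁻¹ ^ (2 * n + k + 2) := by
  simp [measureReal_def, hμ.measure_preimage_cylinder_replicate_false]

/-- exact block probabilities (short block representation, lengths ≤ 3)
for ECA rule 184 started from the symmetric Bernoulli measure `μ_{1/2}`. -/
theorem rule184_block_probabilities_half
    (μ : Measure (ℤ → Bool)) (hprob : IsProbabilityMeasure μ)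
    (hber : IsBernoulli (1 / 2) μ) :
    ∀ n : ℕ,
      (μ ((eca rule184)^[n] ⁻¹' cylinder [false])).toReal = 1 / 2 ∧
      (μ ((eca rule184)^[n] ⁻¹' cylinder [false, false])).toReal
          = (2 : ℝ) ^ (-2 - 2 * (n : ℤ)) * (Nat.choose (2 * n + 1) (n + 1) : ℝ) ∧
      (μ ((eca rule184)^[n] ⁻¹' cylinder [false, false, false])).toReal
          = (2 : ℝ) ^ (-2 * (n : ℤ) - 3) * (Nat.choose (2 * n + 1) (n + 1) : ℝ) ∧
      (μ ((eca rule184)^[n] ⁻¹' cylinder [false, true, false])).toReal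
          = 1 / 2 - 3 * (2 : ℝ) ^ (-3 - 2 * (n : ℤ)) * (Nat.choose (2 * n + 1) (n + 1) : ℝ) := by
  intro n
  have h00 : μ.real ((eca rule184)^[n] ⁻¹' cylinder [false, false]) = _ :=
    hber.measureReal_preimage_cylinder_replicate_false n 0
  have h000 : μ.real ((eca rule184)^[n] ⁻¹' cylinder [false, false, false]) = _ :=
    hber.measureReal_preimage_cylinder_replicate_false n 1
  have two_zpow (k : ℕ) {e : ℤ} (he : e = -k) : (2 : ℝ) ^ e = 2⁻¹ ^ k := by
    rw [he, zpow_neg, zpow_natCast, inv_pow]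
  simp only [← measureReal_def]
  rw [hber.measureReal_preimage_cylinder_false_true_false, hber.measureReal_preimage_cylinder_false,
    h00, h000, Nat.choose_symm_half, two_zpow (2 * n + 2) (by push_cast; ring),
    two_zpow (2 * n + 3) (by push_cast; ring), two_zpow (2 * n + 3) (by push_cast; ring)]
  refine ⟨rfl, ?_, ?_, ?_⟩ <;> ring
end

section
/- For every n ≥ 0, the map M_n, defined on binary words x_0 x_1 … x_m (with symbols in {0,1}) by (M_n(x))_j = (n + j + 1 + Σ_{i=0}^{j} x_i) mod 2 for 0 ≤ j ≤ m, restricts to a bijection from the preimage set f̂_{184}^{−n}(000) onto the preimage set f̂_{14}^{−n}(101), where both sets consist of words of length 2n+3. In particular, the number of n-step preimages of 101 under rule 14 equals the number of n-step preimages of 000 under rule 184: card f̂_{14}^{−n}(101) = card f̂_{184}^{−n}(000). -/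
/-- The local rule of ECA rule 14: `f(x1,x2,x3) = 1` exactly for
`(x1,x2,x3) ∈ {(0,0,1),(0,1,0),(0,1,1)}`. -/
def rule14 (x1 x2 x3 : Bool) : Bool := !x1 && (x2 || x3)

/-- The block evolution operator of the local rule `f`. -/
def blockOp (f : Bool → Bool → Bool → Bool) (a : List Bool) : List Bool :=
  (List.range (a.length - 2)).map fun i =>
    f (a.getD i false) (a.getD (i + 1) false) (a.getD (i + 2) false)

/-- The set `f̂⁻ⁿ(a)` of `n`-step preimages of the word `a` under the block
evolution operator of `f`. -/
def preimSet (f : Bool → Bool → Bool → Bool) (n : ℕ) (a : List Bool) : Set (List Bool) :=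
  {b | b.length = a.length + 2 * n ∧ (blockOp f)^[n] b = a}

/-- The map `M_n` on binary words: `(M_n x)_j = (n + j + 1 + ∑_{i=0}^{j} x_i) mod 2`. -/
def Mmap (n : ℕ) (x : List Bool) : List Bool :=
  (List.range x.length).map fun j =>
    decide ((n + j + 1 + ∑ i ∈ Finset.range (j + 1),
      (if x.getD i false = true then 1 else 0)) % 2 = 1)

/-! ### infrastructure -/

/-- symbol at position `k` -/
def gd (x : List Bool) (k : ℕ) : Bool := x.getD k false

/-- number of `true`s among positions `0..k` -/
def cnt (x : List Bool) (k : ℕ) : ℕ :=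
  ∑ i ∈ Finset.range (k + 1), (if x.getD i false = true then 1 else 0)

/-- previous symbol, with parity-of-`c` boundary at position `0` -/
def prevb (c : ℕ) (y : List Bool) : ℕ → Bool
  | 0 => decide (c % 2 = 1)
  | (k+1) => gd y k

/-- number of positions `i ≤ k` where the symbol equals the previous one -/
def cntE (c : ℕ) (y : List Bool) (k : ℕ) : ℕ :=
  ∑ i ∈ Finset.range (k + 1), (if gd y i = prevb c y i then 1 else 0)

def Bal (x : List Bool) : Prop := ∀ k, k < x.length → 2 * cnt x k ≤ k - 1

def Bal14 (y : List Bool) : Prop :=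
  ∀ k, k < y.length → 2 * cntE ((y.length - 3) / 2) y k ≤ k - 1

lemma length_blockOp (f : Bool → Bool → Bool → Bool) (a : List Bool) :
    (blockOp f a).length = a.length - 2 := by
  simp [blockOp]

lemma gd_blockOp (f : Bool → Bool → Bool → Bool) (a : List Bool) (k : ℕ)
    (hk : k < a.length - 2) :
    gd (blockOp f a) k = f (gd a k) (gd a (k+1)) (gd a (k+2)) := by
  simp [blockOp, gd, List.getD_eq_getElem?_getD, List.getElem?_map, List.getElem?_range, hk]

lemma length_Mmap (n : ℕ) (x : List Bool) : (Mmap n x).length = x.length := by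
  simp [Mmap]

lemma gd_Mmap (n : ℕ) (x : List Bool) (k : ℕ) (hk : k < x.length) :
    gd (Mmap n x) k = decide ((n + k + 1 + cnt x k) % 2 = 1) := by
  simp [Mmap, gd, cnt, List.getD_eq_getElem?_getD, List.getElem?_map, List.getElem?_range, hk]

lemma cnt_succ (x : List Bool) (k : ℕ) :
    cnt x (k+1) = cnt x k + (if gd x (k+1) = true then 1 else 0) := by
  unfold cnt gd; rw [Finset.sum_range_succ]

lemma cntE_succ (c : ℕ) (y : List Bool) (k : ℕ) :
    cntE c y (k+1) = cntE c y k + (if gd y (k+1) = gd y k then 1 else 0) := by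
  unfold cntE; rw [Finset.sum_range_succ]; rfl

lemma cntE_zero (c : ℕ) (y : List Bool) :
    cntE c y 0 = if gd y 0 = decide (c % 2 = 1) then 1 else 0 := by
  unfold cntE; rw [Finset.sum_range_one]; rfl

lemma cnt_zero (x : List Bool) :
    cnt x 0 = if gd x 0 = true then 1 else 0 := by
  unfold cnt gd; rw [Finset.sum_range_one]

lemma gd_ge (x : List Bool) (k : ℕ) (h : x.length ≤ k) : gd x k = false := by
  simp [gd, List.getD_eq_getElem?_getD, List.getElem?_eq_none h]

/-- The fundamental parity identity: every word is the `M`-image of its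
"equal-to-previous" indicator word. -/
lemma idU (c : ℕ) (y : List Bool) (k : ℕ) :
    gd y k = decide ((c + k + 1 + cntE c y k) % 2 = 1) := by
  induction k with
  | zero =>
    rw [cntE_zero]
    rcases h0 : gd y 0 <;> rcases hc : decide (c % 2 = 1) <;>
      simp_all <;> omega
  | succ k ih =>
    have e := cntE_succ c y k
    rw [e]
    rcases h1 : gd y (k+1) <;> rcases h0 : gd y k <;> rw [h0] at ih <;>
      simp only [h1, h0, Bool.false_eq_true, Bool.true_eq_false, if_pos rfl, if_true,
        if_false, reduceIte] <;> symm
    · have hi := of_decide_eq_false ih.symm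
      apply decide_eq_false; omega
    · have hi := of_decide_eq_true ih.symm
      apply decide_eq_false; omega
    · have hi := of_decide_eq_false ih.symm
      apply decide_eq_true; omega
    · have hi := of_decide_eq_true ih.symm
      apply decide_eq_true; omega

/-! ### rule 184 side -/

def bn (b : Bool) : ℕ := if b then 1 else 0

def pp (x : List Bool) (k : ℕ) : ℕ := bn (gd x k && gd x (k+1))

lemma bn_eq (b : Bool) : (if b = true then 1 else 0) = bn b := by cases b <;> rfl

lemma cnt_succ' (x : List Bool) (k : ℕ) :
    cnt x (k+1) = cnt x k + bn (gd x (k+1)) := by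
  rw [cnt_succ, bn_eq]

lemma cnt_zero' (x : List Bool) : cnt x 0 = bn (gd x 0) := by
  rw [cnt_zero, bn_eq]

lemma r184_arith (a b c : Bool) :
    bn (rule184 a b c) + bn (a && b) = bn a + bn (b && c) := by
  cases a <;> cases b <;> cases c <;> rfl

lemma telescope184 (x : List Bool) (K : ℕ) (hK : K < x.length - 2) :
    cnt (blockOp rule184 x) K + pp x 0 = cnt x K + pp x (K+1) := by
  induction K with
  | zero =>
    rw [cnt_zero', cnt_zero', gd_blockOp _ _ _ hK]
    have := r184_arith (gd x 0) (gd x 1) (gd x 2)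
    unfold pp
    simp only [show (0:ℕ)+1 = 1 from rfl, show (0:ℕ)+2 = 2 from rfl,
      show (0:ℕ)+1+1 = 2 from rfl]
    omega
  | succ K ih =>
    have ih' := ih (by omega)
    rw [cnt_succ', cnt_succ', gd_blockOp _ _ _ hK]
    have := r184_arith (gd x (K+1)) (gd x (K+2)) (gd x (K+3))
    unfold pp at *
    have h32 : K+1+2 = K+3 := by omega
    have h21 : K+1+1 = K+2 := by omega
    rw [h32, h21] at *
    omega

lemma cnt_eq_zero_gd (x : List Bool) (k : ℕ) (h : cnt x k = 0) : gd x k = false := by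
  rcases k with _ | k
  · rw [cnt_zero'] at h; unfold bn at h
    rcases hg : gd x 0 <;> simp [hg] at h ⊢
  · rw [cnt_succ'] at h
    rcases hg : gd x (k+1) <;> simp [hg, bn] at h ⊢

lemma bal_step_184 (x : List Bool) (h5 : 5 ≤ x.length) (hodd : x.length % 2 = 1) :
    Bal (blockOp rule184 x) ↔ Bal x := by
  obtain ⟨t, ht⟩ : ∃ t, x.length = 2*t+5 := ⟨(x.length-5)/2, by omega⟩
  have hlw : (blockOp rule184 x).length = 2*t+3 := by rw [length_blockOp]; omega
  constructor
  · -- backward: Bal w → Bal x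
    intro hB
    have x0 : gd x 0 = false := by
      by_contra hx0
      rw [Bool.not_eq_false] at hx0
      have w0 : gd (blockOp rule184 x) 0 = false :=
        cnt_eq_zero_gd _ _ (by have := hB 0 (by omega); omega)
      have w1 : gd (blockOp rule184 x) 1 = false :=
        cnt_eq_zero_gd _ _ (by
          have h1 := hB 1 (by omega)
          have e := cnt_succ' (blockOp rule184 x) 0
          have hbn : bn (gd (blockOp rule184 x) 1) ≤ 1 := by
            unfold bn; rcases gd (blockOp rule184 x) 1 <;> simp
          omega)
      rw [gd_blockOp _ _ _ (by omega)] at w0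
      rw [gd_blockOp _ _ _ (by omega)] at w1
      simp only [show (0:ℕ)+1 = 1 from rfl, show (0:ℕ)+2 = 2 from rfl,
        show (1:ℕ)+1 = 2 from rfl, show (1:ℕ)+2 = 3 from rfl] at w0 w1
      rw [hx0] at w0
      rcases hx1 : gd x 1 <;> rw [hx1] at w0 w1
      · simp [rule184] at w0
      · simp only [rule184, if_true] at w0
        rw [w0] at w1
        simp [rule184] at w1
    have hp0 : pp x 0 = 0 := by unfold pp; rw [x0]; rfl
    intro k hk
    rw [ht] at hk
    rcases Nat.lt_or_ge k (2*t+3) with hk3 | hk3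
    · have tel := telescope184 x k (by omega)
      rw [hp0] at tel
      have hwk := hB k (by omega)
      omega
    · have tel := telescope184 x (2*t+2) (by omega)
      rw [hp0] at tel
      have hb := hB (2*t+2) (by omega)
      have e3 := cnt_succ' x (2*t+2)
      have e4 := cnt_succ' x (2*t+3)
      simp only [show 2*t+2+1 = 2*t+3 from by omega, show 2*t+3+1 = 2*t+4 from by omega] at tel e3 e4
      unfold pp at tel
      simp only [show 2*t+3+1 = 2*t+4 from by omega] at tel
      have hk34 : k = 2*t+3 ∨ k = 2*t+4 := by omega
      rcases hg3 : gd x (2*t+3) <;> rcases hg4 : gd x (2*t+4) <;>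
        rw [hg3, hg4] at tel <;> rw [hg3] at e3 <;> rw [hg4] at e4 <;>
        simp only [Bool.and_self, Bool.and_false, Bool.false_and, Bool.and_true,
          Bool.true_and, show bn true = 1 from rfl, show bn false = 0 from rfl] at tel e3 e4 <;>
        rcases hk34 with rfl | rfl <;> omega
  · -- forward: Bal x → Bal w
    intro hB
    have x0 : gd x 0 = false := cnt_eq_zero_gd _ _ (by have := hB 0 (by omega); omega)
    have hp0 : pp x 0 = 0 := by unfold pp; rw [x0]; rfl
    intro k hk
    rw [hlw] at hk
    have tel := telescope184 x k (by omega)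
    rw [hp0] at tel
    unfold pp at tel
    rcases hpk : (gd x (k+1) && gd x (k+2))
    · rw [hpk] at tel
      rw [show bn false = 0 from rfl] at tel
      have hbk := hB k (by omega)
      omega
    · rw [hpk] at tel
      rw [show bn true = 1 from rfl] at tel
      rw [Bool.and_eq_true] at hpk
      have e1 := cnt_succ' x k
      have e2 := cnt_succ' x (k+1)
      rw [hpk.1] at e1
      rw [show k+1+1 = k+2 from rfl, hpk.2] at e2
      rw [show bn true = 1 from rfl] at e1 e2
      have hb2 := hB (k+2) (by omega)
      omega

lemma char184 : ∀ n (x : List Bool), x.length = 2*n+3 →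
    ((blockOp rule184)^[n] x = [false, false, false] ↔ Bal x) := by
  intro n
  induction n with
  | zero =>
    intro x hlen
    rw [Function.iterate_zero_apply]
    constructor
    · rintro rfl
      intro k hk
      have hg : ∀ i, gd [false, false, false] i = false := by
        intro i; rcases i with _ | _ | _ | i <;> rfl
      have hc : cnt [false, false, false] k = 0 := by
        unfold cnt
        apply Finset.sum_eq_zero
        intro i _
        have := hg i
        unfold gd at this
        rw [this]; rfl
      omega
    · intro hB
      obtain ⟨a, b, c, rfl⟩ := List.length_eq_three.mp hlen
      have h0 : gd [a,b,c] 0 = false := cnt_eq_zero_gd _ _ (by have := hB 0 (by simp); omega)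
      have h1 : gd [a,b,c] 1 = false := cnt_eq_zero_gd _ _ (by have := hB 1 (by simp); omega)
      have h2 : gd [a,b,c] 2 = false := cnt_eq_zero_gd _ _ (by have := hB 2 (by simp); omega)
      unfold gd at h0 h1 h2
      simp at h0 h1 h2
      rw [h0, h1, h2]
  | succ n ih =>
    intro x hlen
    rw [Function.iterate_succ_apply]
    have hlen' : (blockOp rule184 x).length = 2*n+3 := by rw [length_blockOp]; omega
    rw [ih _ hlen']
    exact bal_step_184 x (by omega) (by omega)

/-! ### rule 14 side -/

def vb (y : List Bool) (k : ℕ) : Bool := !gd y k && !gd y (k+1) && !gd y (k+2)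

lemma bn_beq (u v : Bool) : (if u = v then 1 else 0) = bn (u == v) := by
  cases u <;> cases v <;> rfl

/-- pointwise Boolean fact driving the rule-14 telescoping identity -/
lemma r14_arith (a b c d : Bool) :
    bn (rule14 b c d == rule14 a b c) + bn (!a && !b && !c)
      = bn (b == a) + bn (!b && !c && !d) := by
  cases a <;> cases b <;> cases c <;> cases d <;> rfl

lemma r14_arith0 (pc a b c : Bool) (hv : (!a && !b && !c) = false) :
    bn (rule14 a b c == pc) = bn (a == !pc) := by
  cases a <;> cases b <;> cases c <;> cases pc <;> simp_all <;> rfl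

lemma telescope14 (y : List Bool) (c : ℕ) (hv0 : vb y 0 = false) :
    ∀ K, K < y.length - 2 →
      cntE c (blockOp rule14 y) K = cntE (c+1) y K + bn (vb y K) := by
  have hpc : (decide ((c+1) % 2 = 1)) = !(decide (c % 2 = 1)) := by
    rcases h : decide (c % 2 = 1) <;> simp at h ⊢ <;> omega
  intro K
  induction K with
  | zero =>
    intro hK
    rw [cntE_zero, cntE_zero, gd_blockOp _ _ _ hK, hpc, bn_beq, bn_beq, hv0]
    simp only [show (0:ℕ)+1 = 1 from rfl, show (0:ℕ)+2 = 2 from rfl]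
    unfold vb at hv0
    rw [r14_arith0 _ _ _ _ hv0]
    rfl
  | succ K ih =>
    intro hK
    have ih' := ih (by omega)
    rw [cntE_succ, cntE_succ, gd_blockOp _ _ _ hK, gd_blockOp _ _ _ (by omega), ih']
    have := r14_arith (gd y K) (gd y (K+1)) (gd y (K+2)) (gd y (K+3))
    rw [bn_beq, bn_beq]
    unfold vb
    simp only [show K+1+1 = K+2 from rfl, show K+1+2 = K+3 from rfl]
    omega

lemma cntE_const_run (c : ℕ) (w : List Bool) (s : ℕ) (val : Bool) :
    ∀ j, (∀ i, s ≤ i → i ≤ s + j → gd w i = val) →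
      cntE c w (s + j) = cntE c w s + j := by
  intro j
  induction j with
  | zero => intro _; simp
  | succ j ih =>
    intro h
    have ih' := ih (fun i hi hij => h i hi (by omega))
    show cntE c w (s+j+1) = cntE c w s + (j+1)
    rw [cntE_succ, ih', h (s+j+1) (by omega) (by omega), h (s+j) (by omega) (by omega),
      if_pos rfl]
    omega

lemma bal_step_14 (y : List Bool) (h5 : 5 ≤ y.length) (hodd : y.length % 2 = 1) :
    Bal14 (blockOp rule14 y) ↔ Bal14 y := by
  obtain ⟨t, ht⟩ : ∃ t, y.length = 2*t+5 := ⟨(y.length-5)/2, by omega⟩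
  have hlz : (blockOp rule14 y).length = 2*t+3 := by rw [length_blockOp]; omega
  have hcy : (y.length - 3)/2 = t+1 := by omega
  have hcz : ((blockOp rule14 y).length - 3)/2 = t := by rw [hlz]; omega
  unfold Bal14
  rw [hcy, hcz, hlz, ht]
  set z := blockOp rule14 y with hz
  constructor
  · -- Bal z → Bal y
    intro hB
    have hv0 : vb y 0 = false := by
      by_contra hv
      rw [Bool.not_eq_false] at hv
      simp only [vb, Bool.and_eq_true, Bool.not_eq_true'] at hv
      obtain ⟨⟨hy0, hy1⟩, hy2⟩ := hv
      have z0 : gd z 0 = false := by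
        rw [hz, gd_blockOp _ _ _ (by omega)]
        simp only [show (0:ℕ)+1 = 1 from rfl, show (0:ℕ)+2 = 2 from rfl]
        rw [hy0, hy1, hy2]; rfl
      have h2 := hB 2 (by omega)
      have e1 := cntE_succ t z 0
      have e2 := cntE_succ t z 1
      simp only [show (0:ℕ)+1 = 1 from rfl, show (1:ℕ)+1 = 2 from rfl] at e1 e2
      by_cases h10 : gd z 1 = gd z 0
      · rw [if_pos h10] at e1
        omega
      · have z1t : gd z 1 = true := by
          rcases h1 : gd z 1
          · rw [h1, z0] at h10; simp at h10
          · rfl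
        have hy3 : gd y 3 = true := by
          have e := gd_blockOp rule14 y 1 (by omega)
          rw [← hz] at e
          rw [e, show (1:ℕ)+1 = 2 from rfl, show (1:ℕ)+2 = 3 from rfl, hy1, hy2] at z1t
          simpa [rule14] using z1t
        have z2t : gd z 2 = true := by
          have e := gd_blockOp rule14 y 2 (by omega)
          rw [← hz] at e
          rw [e, show (2:ℕ)+1 = 3 from rfl, show (2:ℕ)+2 = 4 from rfl, hy2, hy3]
          rfl
        rw [if_pos (z2t.trans z1t.symm)] at e2
        omega
    have ID := telescope14 y t hv0
    rw [← hz] at ID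
    intro k hk
    rcases Nat.lt_or_ge k (2*t+3) with hk3 | hk3
    · have id := ID k (by omega)
      have hbk := hB k (by omega)
      omega
    · have id2 := ID (2*t+2) (by omega)
      have hb2 := hB (2*t+2) (by omega)
      have e3 := cntE_succ (t+1) y (2*t+2)
      have e4 := cntE_succ (t+1) y (2*t+3)
      rw [show 2*t+2+1 = 2*t+3 from by omega] at e3
      rw [show 2*t+3+1 = 2*t+4 from by omega] at e4
      have hk34 : k = 2*t+3 ∨ k = 2*t+4 := by omega
      by_cases u3 : gd y (2*t+3) = gd y (2*t+2)
      · rw [if_pos u3] at e3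
        by_cases u4 : gd y (2*t+4) = gd y (2*t+3)
        · rw [if_pos u4] at e4
          rcases hval : gd y (2*t+2)
          · have y3f : gd y (2*t+3) = false := u3.trans hval
            have y4f : gd y (2*t+4) = false := u4.trans y3f
            have hvt : vb y (2*t+2) = true := by
              unfold vb
              rw [show 2*t+2+1 = 2*t+3 from by omega, show 2*t+2+2 = 2*t+4 from by omega,
                hval, y3f, y4f]
              rfl
            rw [hvt, show bn true = 1 from rfl] at id2
            rcases hk34 with rfl | rfl <;> omega
          · -- RUN CASE
            have y3 : gd y (2*t+3) = true := u3.trans hval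
            have y4 : gd y (2*t+4) = true := u4.trans y3
            have main : ∀ s, s ≤ 2*t+2 → (∀ j, s ≤ j → j ≤ 2*t+4 → gd y j = true) →
                2 * cntE (t+1) y (2*t+3) ≤ 2*t+2 ∧ 2 * cntE (t+1) y (2*t+4) ≤ 2*t+3 := by
              intro s
              induction s using Nat.strong_induction_on with
              | _ s ihs =>
              intro hs hrun
              rcases Nat.eq_zero_or_pos s with rfl | hpos
              · exfalso
                have z0 : gd z 0 = false := by
                  rw [hz, gd_blockOp _ _ _ (by omega), hrun 0 (by omega) (by omega)]; rfl
                have z1 : gd z 1 = false := by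
                  rw [hz, gd_blockOp _ _ _ (by omega), hrun 1 (by omega) (by omega)]; rfl
                have e1 := cntE_succ t z 0
                simp only [show (0:ℕ)+1 = 1 from rfl] at e1
                rw [if_pos (z1.trans z0.symm)] at e1
                have hb1 := hB 1 (by omega)
                omega
              · by_cases hprev : gd y (s-1) = true
                · exact ihs (s-1) (by omega) (by omega) (fun j hj hj' => by
                    rcases Nat.lt_or_ge j s with h | h
                    · have hje : j = s-1 := by omega
                      rw [hje]; exact hprev
                    · exact hrun j (by omega) hj')
                · rw [Bool.not_eq_true] at hprev
                  obtain ⟨s', rfl⟩ : ∃ s', s = s'+1 := ⟨s-1, by omega⟩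
                  rw [show s'+1-1 = s' from by omega] at hprev
                  have zfalse : ∀ i, s'+1 ≤ i → i ≤ 2*t+2 → gd z i = false := by
                    intro i hi hi'
                    rw [hz, gd_blockOp _ _ _ (by omega), hrun i (by omega) (by omega)]
                    rfl
                  have zs : gd z s' = true := by
                    rw [hz, gd_blockOp _ _ _ (by omega)]
                    rw [hprev, hrun (s'+1) (by omega) (by omega)]
                    rfl
                  obtain ⟨j, hj⟩ : ∃ j, (s'+1) + j = 2*t+2 := ⟨2*t+2-(s'+1), by omega⟩
                  have csz : cntE t z (2*t+2) = cntE t z (s'+1) + j := by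
                    rw [← hj]
                    exact cntE_const_run t z (s'+1) false j
                      (fun i hi hi' => zfalse i hi (by omega))
                  have cs0 : cntE t z (s'+1) = cntE t z s' := by
                    have e := cntE_succ t z s'
                    rw [if_neg (by rw [zfalse (s'+1) (by omega) (by omega), zs]; simp)] at e
                    omega
                  have cys3 : cntE (t+1) y (2*t+3) = cntE (t+1) y (s'+1) + (j+1) := by
                    rw [show 2*t+3 = (s'+1) + (j+1) from by omega]
                    exact cntE_const_run (t+1) y (s'+1) true (j+1)
                      (fun i hi hi' => hrun i (by omega) (by omega))
                  have cys4 : cntE (t+1) y (2*t+4) = cntE (t+1) y (s'+1) + (j+2) := by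
                    rw [show 2*t+4 = (s'+1) + (j+2) from by omega]
                    exact cntE_const_run (t+1) y (s'+1) true (j+2)
                      (fun i hi hi' => hrun i (by omega) (by omega))
                  have cy0 : cntE (t+1) y (s'+1) = cntE (t+1) y s' := by
                    have e := cntE_succ (t+1) y s'
                    rw [if_neg (by rw [hrun (s'+1) (by omega) (by omega), hprev]; simp)] at e
                    omega
                  have idlow := ID s' (by omega)
                  have par := idU t z (2*t+2)
                  rw [zfalse (2*t+2) (by omega) (by omega)] at par
                  have pf := of_decide_eq_false par.symm
                  have hb2' := hB (2*t+2) (by omega)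
                  omega
            have hm := main (2*t+2) le_rfl (fun j hj hj' => by
              rcases (by omega : j = 2*t+2 ∨ j = 2*t+3 ∨ j = 2*t+4) with rfl | rfl | rfl
              exacts [hval, y3, y4])
            rcases hk34 with rfl | rfl
            · have := hm.1; omega
            · have := hm.2; omega
        · rw [if_neg u4] at e4
          rcases hk34 with rfl | rfl <;> omega
      · rw [if_neg u3] at e3
        have i4 : (if gd y (2*t+4) = gd y (2*t+3) then 1 else 0) ≤ 1 := by split <;> omega
        rcases hk34 with rfl | rfl <;> omega
  · -- Bal y → Bal z
    intro hB
    have hv0 : vb y 0 = false := by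
      by_contra hv
      rw [Bool.not_eq_false] at hv
      simp only [vb, Bool.and_eq_true, Bool.not_eq_true'] at hv
      obtain ⟨⟨hy0, hy1⟩, hy2⟩ := hv
      have e1 := cntE_succ (t+1) y 0
      simp only [show (0:ℕ)+1 = 1 from rfl] at e1
      rw [if_pos (hy1.trans hy0.symm)] at e1
      have hb1 := hB 1 (by omega)
      omega
    have ID := telescope14 y t hv0
    rw [← hz] at ID
    intro k hk
    have id := ID k (by omega)
    have hbk := hB k (by omega)
    rcases hvk : vb y k
    · rw [hvk, show bn false = 0 from rfl] at id
      omega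
    · rw [hvk, show bn true = 1 from rfl] at id
      simp only [vb, Bool.and_eq_true, Bool.not_eq_true'] at hvk
      obtain ⟨⟨h0, h1⟩, h2⟩ := hvk
      have e1 := cntE_succ (t+1) y k
      have e2 := cntE_succ (t+1) y (k+1)
      rw [if_pos (h1.trans h0.symm)] at e1
      rw [show k+1+1 = k+2 from rfl, if_pos (h2.trans h1.symm)] at e2
      have hb2 := hB (k+2) (by omega)
      omega

lemma ite_zero {u v : Bool} (h : (if u = v then 1 else 0) = 0) : u ≠ v := by
  intro he
  rw [if_pos he] at h
  omega

lemma char14 : ∀ n (y : List Bool), y.length = 2*n+3 →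
    ((blockOp rule14)^[n] y = [true, false, true] ↔ Bal14 y) := by
  intro n
  induction n with
  | zero =>
    intro y hlen
    rw [Function.iterate_zero_apply]
    constructor
    · rintro rfl
      intro k hk
      simp only [List.length_cons, List.length_nil] at hk
      have hc : (([true, false, true] : List Bool).length - 3)/2 = 0 := rfl
      rw [hc]
      have c0 : cntE 0 [true, false, true] 0 = 0 := by rw [cntE_zero]; rfl
      have e1 := cntE_succ 0 [true, false, true] 0
      have e2 := cntE_succ 0 [true, false, true] 1
      simp only [show (0:ℕ)+1 = 1 from rfl, show (1:ℕ)+1 = 2 from rfl] at e1 e2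
      have i1 : (if gd [true, false, true] 1 = gd [true, false, true] 0 then 1 else 0) = 0 := rfl
      have i2 : (if gd [true, false, true] 2 = gd [true, false, true] 1 then 1 else 0) = 0 := rfl
      rw [i1] at e1
      rw [i2] at e2
      interval_cases k <;> omega
    · intro hB
      have hc : ((y.length - 3))/2 = 0 := by omega
      have h0 := hB 0 (by omega)
      have h1 := hB 1 (by omega)
      have h2 := hB 2 (by omega)
      rw [hc] at h0 h1 h2
      have e0 := cntE_zero 0 y
      have e1 := cntE_succ 0 y 0
      have e2 := cntE_succ 0 y 1
      simp only [show (0:ℕ)+1 = 1 from rfl, show (1:ℕ)+1 = 2 from rfl] at e1 e2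
      have i0 : (if gd y 0 = decide ((0:ℕ) % 2 = 1) then 1 else 0) = 0 := by omega
      have i1 : (if gd y 1 = gd y 0 then 1 else 0) = 0 := by omega
      have i2 : (if gd y 2 = gd y 1 then 1 else 0) = 0 := by omega
      have g0 : gd y 0 = true := by
        have h := ite_zero i0
        rcases hg : gd y 0
        · rw [hg] at h; exact absurd (by rfl) h
        · rfl
      have g1 : gd y 1 = false := by
        have h := ite_zero i1
        rcases hg : gd y 1
        · rfl
        · rw [hg, g0] at h; exact absurd rfl h
      have g2 : gd y 2 = true := by
        have h := ite_zero i2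
        rcases hg : gd y 2
        · rw [hg, g1] at h; exact absurd rfl h
        · rfl
      obtain ⟨a, b, c, rfl⟩ := List.length_eq_three.mp (show y.length = 3 by omega)
      rw [show a = true from g0, show b = false from g1, show c = true from g2]
  | succ n ih =>
    intro y hlen
    rw [Function.iterate_succ_apply]
    have hlen' : (blockOp rule14 y).length = 2*n+3 := by rw [length_blockOp]; omega
    rw [ih _ hlen']
    exact bal_step_14 y (by omega) (by omega)

/-! ### the M map -/

lemma bn_one (b : Bool) : (b = true) ↔ (bn b = 1) := by cases b <;> simp [bn]

lemma ueq_Mmap_iff (n : ℕ) (x : List Bool) (k : ℕ) (hk : k < x.length) :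
    (gd (Mmap n x) k = prevb n (Mmap n x) k) ↔ gd x k = true := by
  cases k with
  | zero =>
    have hM := gd_Mmap n x 0 hk
    have hp : prevb n (Mmap n x) 0 = decide (n % 2 = 1) := rfl
    rw [hM, hp, cnt_zero', bn_one (gd x 0), decide_eq_decide]
    have hu : bn (gd x 0) ≤ 1 := by unfold bn; split <;> omega
    omega
  | succ k =>
    have hM1 := gd_Mmap n x (k+1) hk
    have hM0 := gd_Mmap n x k (by omega)
    have hp : prevb n (Mmap n x) (k+1) = gd (Mmap n x) k := rfl
    rw [hM1, hp, hM0, cnt_succ', bn_one (gd x (k+1)), decide_eq_decide]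
    have hu : bn (gd x (k+1)) ≤ 1 := by unfold bn; split <;> omega
    omega

lemma ueq_ite_Mmap (n : ℕ) (x : List Bool) (k : ℕ) (hk : k < x.length) :
    (if gd (Mmap n x) k = prevb n (Mmap n x) k then 1 else 0)
      = (if gd x k = true then 1 else 0) := by
  by_cases h : gd x k = true
  · rw [if_pos ((ueq_Mmap_iff n x k hk).mpr h), if_pos h]
  · rw [if_neg (fun hc => h ((ueq_Mmap_iff n x k hk).mp hc)), if_neg h]

lemma cntE_Mmap (n : ℕ) (x : List Bool) (k : ℕ) (hk : k < x.length) :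
    cntE n (Mmap n x) k = cnt x k :=
  Finset.sum_congr rfl (fun i hi =>
    ueq_ite_Mmap n x i (by have := Finset.mem_range.mp hi; omega))

lemma bal14_Mmap (n : ℕ) (x : List Bool) (hlen : x.length = 2*n+3) :
    Bal14 (Mmap n x) ↔ Bal x := by
  unfold Bal14 Bal
  rw [length_Mmap, hlen, show (2*n+3-3)/2 = n from by omega]
  constructor <;> intro h k hk
  · rw [← cntE_Mmap n x k (by omega)]
    exact h k hk
  · rw [cntE_Mmap n x k (by omega)]
    exact h k hk

def invM (n : ℕ) (y : List Bool) : List Bool :=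
  (List.range y.length).map fun k => gd y k == prevb n y k

lemma length_invM (n : ℕ) (y : List Bool) : (invM n y).length = y.length := by
  simp [invM]

lemma gd_invM (n : ℕ) (y : List Bool) (k : ℕ) (hk : k < y.length) :
    gd (invM n y) k = (gd y k == prevb n y k) := by
  simp [invM, gd, List.getD_eq_getElem?_getD, List.getElem?_map, List.getElem?_range, hk]

lemma gd_lt (a : List Bool) (i : ℕ) (h : i < a.length) : gd a i = a[i] := by
  simp [gd, List.getD_eq_getElem?_getD, List.getElem?_eq_getElem h]

lemma list_eq (a b : List Bool) (hl : a.length = b.length)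
    (h : ∀ k, k < a.length → gd a k = gd b k) : a = b := by
  apply List.ext_getElem hl
  intro i h1 h2
  have := h i h1
  rwa [gd_lt a i h1, gd_lt b i h2] at this

lemma invM_Mmap (n : ℕ) (x : List Bool) : invM n (Mmap n x) = x := by
  apply list_eq
  · rw [length_invM, length_Mmap]
  · intro k hk
    have hkx : k < x.length := by rwa [length_invM, length_Mmap] at hk
    rw [gd_invM _ _ _ (by rwa [length_Mmap])]
    rcases hxk : gd x k
    · rw [beq_eq_false_iff_ne]
      intro hc
      have := (ueq_Mmap_iff n x k hkx).mp hc
      rw [hxk] at this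
      exact absurd this (by simp)
    · exact beq_iff_eq.mpr ((ueq_Mmap_iff n x k hkx).mpr hxk)

lemma cnt_invM (n : ℕ) (y : List Bool) (k : ℕ) (hk : k < y.length) :
    cnt (invM n y) k = cntE n y k :=
  Finset.sum_congr rfl (fun i hi => by
    have hiy : i < y.length := by have := Finset.mem_range.mp hi; omega
    rw [show (invM n y).getD i false = gd (invM n y) i from rfl, gd_invM n y i hiy]
    simp only [beq_iff_eq])

lemma Mmap_invM (n : ℕ) (y : List Bool) : Mmap n (invM n y) = y := by
  apply list_eq
  · rw [length_Mmap, length_invM]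
  · intro k hk
    have hky : k < y.length := by rwa [length_Mmap, length_invM] at hk
    rw [gd_Mmap n _ k (by rwa [length_invM]), cnt_invM n y k hky]
    exact (idU n y k).symm

/-! ### main theorem -/

/-- `M_n` is a bijection from the `n`-step preimages of `000` under
rule 184 onto the `n`-step preimages of `101` under rule 14; in particular these two
preimage sets have the same cardinality. -/
theorem rule14_rule184_preimage_bijection (n : ℕ) :
    Set.BijOn (Mmap n) (preimSet rule184 n [false, false, false])
        (preimSet rule14 n [true, false, true]) ∧
      (preimSet rule14 n [true, false, true]).ncard
        = (preimSet rule184 n [false, false, false]).ncard := by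
  have hbij : Set.BijOn (Mmap n) (preimSet rule184 n [false, false, false])
      (preimSet rule14 n [true, false, true]) := by
    refine ⟨?_, ?_, ?_⟩
    · -- MapsTo
      intro x hx
      obtain ⟨hxl, hxp⟩ := hx
      simp only [List.length_cons, List.length_nil] at hxl
      have hlen : x.length = 2*n+3 := by omega
      have hBal : Bal x := (char184 n x hlen).mp hxp
      constructor
      · rw [length_Mmap]
        simpa using hxl
      · exact (char14 n (Mmap n x) (by rw [length_Mmap]; omega)).mpr
          ((bal14_Mmap n x hlen).mpr hBal)
    · -- InjOn
      intro a _ b _ h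
      rw [← invM_Mmap n a, h, invM_Mmap]
    · -- SurjOn
      intro y hy
      obtain ⟨hyl, hyp⟩ := hy
      simp only [List.length_cons, List.length_nil] at hyl
      have hyl' : y.length = 2*n+3 := by omega
      have hBal14 : Bal14 y := (char14 n y hyl').mp hyp
      have hxlen : (invM n y).length = 2*n+3 := by rw [length_invM]; omega
      have hBal : Bal (invM n y) := by
        have := (bal14_Mmap n (invM n y) hxlen).mp (by rwa [Mmap_invM])
        exact this
      refine ⟨invM n y, ⟨?_, (char184 n (invM n y) hxlen).mpr hBal⟩, Mmap_invM n y⟩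
      rw [hxlen]
      simp only [List.length_cons, List.length_nil]
      omega
  refine ⟨hbij, ?_⟩
  rw [← hbij.image_eq]
  exact Set.ncard_image_of_injOn hbij.injOn
end

section
/- Fix α ∈ [0,1] and let w be the transition probabilities of rule 200A: w(1|b) = 0 for b ∈ {000,001,100,101}, w(1|b) = 1 for b ∈ {011,110,111}, w(1|010) = 1−α, and w(0|b) = 1 − w(1|b). Then for every n ≥ 1 and every binary word b = b_0 b_1 … b_{2n} of length 2n+1 (central index n), the n-step transition probability satisfies: w^n(1|b) = 0 if b_n = 0; w^n(1|b) = (1−α)^n if b_n = 1 and b_{n−1} = b_{n+1} = 0; and w^n(1|b) = 1 if b_n = 1 and at least one of b_{n−1}, b_{n+1} equals 1. -/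
/-- Block transition probability `w(a|b) = ∏_j w(a_j | b_j b_{j+1} b_{j+2})` of a
radius-1 binary probabilistic CA with local transition probabilities `w`. -/
noncomputable def wBlock (w : Bool → Bool → Bool → Bool → ℝ) (a b : List Bool) : ℝ :=
  ∏ j ∈ Finset.range a.length,
    w (a.getD j false) (b.getD j false) (b.getD (j + 1) false) (b.getD (j + 2) false)

/-- `n`-step block transition probabilities: `w⁰` is the identity, `w¹ = w`, and
`wⁿ(a|b) = ∑_{b' ∈ {0,1}^{|a|+2(n−1)}} w^{n−1}(a|b')·w(b'|b)`. -/
noncomputable def wIter (w : Bool → Bool → Bool → Bool → ℝ) :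
    ℕ → List Bool → List Bool → ℝ
  | 0, a, b => if a = b then 1 else 0
  | (n + 1), a, b =>
      ∑ b' : Fin (a.length + 2 * n) → Bool,
        wIter w n a (List.ofFn b') * wBlock w (List.ofFn b') b

/-- Local transition probabilities of rule 200A (α-asynchronous rule 200):
`w(1|b) = 0` for `b ∈ {000,001,100,101}`, `w(1|b) = 1` for `b ∈ {011,110,111}`,
`w(1|010) = 1 − α`, and `w(0|b) = 1 − w(1|b)`. -/
noncomputable def w200A (α : ℝ) (a x1 x2 x3 : Bool) : ℝ :=
  let w1 : ℝ := if x2 = false then 0 else if x1 = true ∨ x3 = true then 1 else 1 - α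
  if a then w1 else 1 - w1

open Finset in
private lemma sum_pi_bool_prod' {m : ℕ} (H : Fin m → Bool → ℝ) :
    ∑ f : Fin m → Bool, ∏ j, H j (f j) = ∏ j, (H j false + H j true) := by
  have := Finset.prod_univ_sum (fun _ : Fin m => (Finset.univ : Finset Bool)) (fun j x => H j x)
  simp only [Fintype.piFinset_univ, Fintype.sum_bool] at this
  rw [← this]
  exact Finset.prod_congr rfl fun j _ => by rw [add_comm]

open Finset in
private lemma prod_eq_three' {m : ℕ} (g : Fin m → ℝ) (i0 i1 i2 : Fin m)
    (h01 : i0 ≠ i1) (h02 : i0 ≠ i2) (h12 : i1 ≠ i2)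
    (hg : ∀ j, j ≠ i0 → j ≠ i1 → j ≠ i2 → g j = 1) :
    ∏ j, g j = g i0 * g i1 * g i2 := by
  rw [← Finset.prod_subset (Finset.subset_univ ({i0, i1, i2} : Finset (Fin m)))
      (fun x _ hx => by simp at hx; exact hg x hx.1 hx.2.1 hx.2.2)]
  rw [Finset.prod_insert (by simp [h01, h02]), Finset.prod_insert (by simp [h12]),
    Finset.prod_singleton, mul_assoc]

open Finset in
private lemma marginal' {m : ℕ} (i0 i1 i2 : Fin m) (h01 : i0 ≠ i1) (h02 : i0 ≠ i2) (h12 : i1 ≠ i2)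
    (G : Bool → Bool → Bool → ℝ) (h : Fin m → Bool → ℝ)
    (hnorm : ∀ j, h j false + h j true = 1) :
    ∑ f : Fin m → Bool, G (f i0) (f i1) (f i2) * ∏ j, h j (f j)
      = ∑ c1 : Bool, ∑ c2 : Bool, ∑ c3 : Bool,
          G c1 c2 c3 * (h i0 c1 * h i1 c2 * h i2 c3) := by
  set H : Bool → Bool → Bool → Fin m → Bool → ℝ :=
    fun c1 c2 c3 j x =>
      if j = i0 then (if x = c1 then h j x else 0)
      else if j = i1 then (if x = c2 then h j x else 0)
      else if j = i2 then (if x = c3 then h j x else 0) else h j x with hH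
  have hprod : ∀ (f : Fin m → Bool) c1 c2 c3, (∏ j, H c1 c2 c3 j (f j))
      = if f i0 = c1 ∧ f i1 = c2 ∧ f i2 = c3 then ∏ j, h j (f j) else 0 := by
    intro f c1 c2 c3
    by_cases hc : f i0 = c1 ∧ f i1 = c2 ∧ f i2 = c3
    · rw [if_pos hc]
      refine Finset.prod_congr rfl fun j _ => ?_
      simp only [hH]
      split_ifs with hj0 hj1 hj2 <;> simp_all
    · rw [if_neg hc]
      by_cases h0 : f i0 = c1
      · by_cases h1 : f i1 = c2
        · have h2 : f i2 ≠ c3 := fun h2 => hc ⟨h0, h1, h2⟩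
          refine Finset.prod_eq_zero (Finset.mem_univ i2) ?_
          simp [hH, h2, h12.symm, (Ne.symm h02 : i2 ≠ i0)]
        · refine Finset.prod_eq_zero (Finset.mem_univ i1) ?_
          simp [hH, h1, (Ne.symm h01 : i1 ≠ i0)]
      · refine Finset.prod_eq_zero (Finset.mem_univ i0) ?_
        simp [hH, h0]
  have stepA : ∀ f : Fin m → Bool,
      G (f i0) (f i1) (f i2) * ∏ j, h j (f j)
      = ∑ c1 : Bool, ∑ c2 : Bool, ∑ c3 : Bool, G c1 c2 c3 * ∏ j, H c1 c2 c3 j (f j) := by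
    intro f
    simp only [hprod]
    cases hf0 : f i0 <;> cases hf1 : f i1 <;> cases hf2 : f i2 <;>
      simp [Fintype.sum_bool]
  simp only [stepA]
  rw [Finset.sum_comm]
  refine Finset.sum_congr rfl fun c1 _ => ?_
  rw [Finset.sum_comm]
  refine Finset.sum_congr rfl fun c2 _ => ?_
  rw [Finset.sum_comm]
  refine Finset.sum_congr rfl fun c3 _ => ?_
  rw [← Finset.mul_sum, sum_pi_bool_prod']
  congr 1
  rw [prod_eq_three' _ i0 i1 i2 h01 h02 h12
    (fun j hj0 hj1 hj2 => by simp only [hH, if_neg hj0, if_neg hj1, if_neg hj2]; exact hnorm j)]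
  simp only [hH, if_pos rfl, if_neg (Ne.symm h01), if_neg (Ne.symm h02), if_neg (Ne.symm h12)]
  cases c1 <;> cases c2 <;> cases c3 <;> simp

/-- the closed form of the n-step one-point probability. -/
noncomputable def Fn200A (α : ℝ) (n : ℕ) (x1 x2 x3 : Bool) : ℝ :=
  if x2 = false then 0 else if x1 = true ∨ x3 = true then 1 else (1-α)^n

private lemma ofFn_getD' {k : ℕ} (f : Fin k → Bool) (j : ℕ) (hj : j < k) :
    (List.ofFn f).getD j false = f ⟨j, hj⟩ := by
  rw [List.getD_eq_getElem _ _ (by simpa using hj)]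
  simp

open Finset in
private lemma rule200A_base (α : ℝ) (b : List Bool) (hb : b.length = 3) :
    wIter (w200A α) 1 [true] b
      = Fn200A α 1 (b.getD 0 false) (b.getD 1 false) (b.getD 2 false) := by
  obtain ⟨x0, x1, x2, rfl⟩ := List.length_eq_three.mp hb
  show wIter (w200A α) (0+1) [true] [x0,x1,x2] = _
  rw [wIter]
  show (∑ b' : Fin 1 → Bool,
      wIter (w200A α) 0 [true] (List.ofFn b') * wBlock (w200A α) (List.ofFn b') [x0,x1,x2]) = _
  rw [← Equiv.sum_comp (Equiv.funUnique (Fin 1) Bool).symm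
    (fun b' : Fin 1 → Bool =>
      wIter (w200A α) 0 [true] (List.ofFn b') * wBlock (w200A α) (List.ofFn b') [x0,x1,x2])]
  rw [Fintype.sum_bool]
  simp only [Equiv.funUnique_symm_apply]
  simp only [wIter, wBlock, List.ofFn_const]
  norm_num
  cases x0 <;> cases x1 <;> cases x2 <;> simp [w200A, Fn200A]

open Finset in
private lemma rule200A_key (α : ℝ) : ∀ n, 1 ≤ n → ∀ b : List Bool, b.length = 2*n+1 →
    wIter (w200A α) n [true] b
      = Fn200A α n (b.getD (n-1) false) (b.getD n false) (b.getD (n+1) false) := by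
  intro n hn
  induction n, hn using Nat.le_induction with
  | base =>
    intro b hb
    exact rule200A_base α b (by omega)
  | succ n hn ih =>
    intro b hb
    obtain ⟨m, rfl⟩ : ∃ m, n = m + 1 := ⟨n-1, by omega⟩
    show wIter (w200A α) ((m+1)+1) [true] b = _
    rw [wIter]
    have hK : ([true] : List Bool).length + 2*(m+1) = 2*m+3 := by simp; ring
    rw [hK]
    set h : Fin (2*m+3) → Bool → ℝ :=
      fun j c => w200A α c (b.getD j false) (b.getD (j+1) false) (b.getD (j+2) false) with hh
    have hsum : ∀ f : Fin (2*m+3) → Bool,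
        wIter (w200A α) (m+1) [true] (List.ofFn f) * wBlock (w200A α) (List.ofFn f) b
        = Fn200A α (m+1) (f ⟨m, by omega⟩) (f ⟨m+1, by omega⟩) (f ⟨m+2, by omega⟩)
          * ∏ j : Fin (2*m+3), h j (f j) := by
      intro f
      congr 1
      · rw [ih (List.ofFn f) (by simp; ring)]
        rw [show m+1-1 = m from rfl]
        rw [ofFn_getD' f m (by omega), ofFn_getD' f (m+1) (by omega),
          ofFn_getD' f (m+1+1) (by omega)]
      · unfold wBlock
        rw [List.length_ofFn, ← Fin.prod_univ_eq_prod_range]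
        exact Finset.prod_congr rfl fun j _ => by rw [ofFn_getD' f j j.isLt]
    simp only [hsum]
    rw [marginal' ⟨m, by omega⟩ ⟨m+1, by omega⟩ ⟨m+2, by omega⟩
      (by simp [Fin.ext_iff]) (by simp [Fin.ext_iff]) (by simp [Fin.ext_iff])
      (Fn200A α (m+1)) h (fun j => by simp [hh, w200A])]
    simp only [hh, Fin.val_mk]
    rw [show m+1+1 = m+2 from rfl, show m+2+1 = m+3 from rfl, show m+2-1 = m+1 from rfl]
    generalize b.getD m false = v0
    generalize b.getD (m+1) false = v1
    generalize b.getD (m+2) false = v2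
    generalize b.getD (m+3) false = v3
    generalize b.getD (m+4) false = v4
    cases v0 <;> cases v1 <;> cases v2 <;> cases v3 <;> cases v4 <;>
      simp [Fn200A, w200A, Fintype.sum_bool] <;> ring


/-- `n`-step transition probabilities of rule 200A: for a word
`b = b_0 … b_{2n}` (central index `n`), `wⁿ(1|b)` equals `0` if `b_n = 0`,
`(1−α)ⁿ` if `b_n = 1` and both neighbours of the centre are `0`, and `1` if
`b_n = 1` and at least one neighbour of the centre is `1`. -/

theorem rule200A_nstep_transition
    (α : ℝ) (hα0 : 0 ≤ α) (hα1 : α ≤ 1) (n : ℕ) (hn : 1 ≤ n)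
    (b : List Bool) (hb : b.length = 2 * n + 1) :
    (b.getD n false = false → wIter (w200A α) n [true] b = 0) ∧
    (b.getD n false = true → b.getD (n - 1) false = false → b.getD (n + 1) false = false →
      wIter (w200A α) n [true] b = (1 - α) ^ n) ∧
    (b.getD n false = true → (b.getD (n - 1) false = true ∨ b.getD (n + 1) false = true) →
      wIter (w200A α) n [true] b = 1) := by
  have key := rule200A_key α n hn b hb
  rw [key]
  unfold Fn200A
  refine ⟨fun h2 => by rw [if_pos h2], fun h2 h1 h3 => ?_, fun h2 h13 => ?_⟩
  · rw [h2, h1, h3]; norm_num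
  · rw [h2, if_neg (by simp), if_pos h13]
end
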